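/- arXiv:1901.10081 — 11 statements merged into one kernel-verified Lean document; each statement's English description precedes it below -/
import Mathlib

section
/- Let n be a positive integer. There exists a ring R of characteristic n whose group of units is a 2-group if and only if n is of the form 2^a · p_1 · p_2 · ⋯ · p_k, where a ≥ 0, k ≥ 0, and p_1, …, p_k are distinct Fermat primes. -/
open Finset

private lemma totient_prod_fermat (T : Finset ℕ)
    (h : ∀ q ∈ T, q.Prime ∧ ∃ m : ℕ, 0 < m ∧ q = 2 ^ m + 1) :
    ∃ s : ℕ, (∏ q ∈ T, q).totient = 2 ^ s := by
  classical
  induction T using Finset.induction_on with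
  | empty => exact ⟨0, by simp⟩
  | @insert a s ha ih =>
    obtain ⟨hap, m, hm, ham⟩ := h a (mem_insert_self a s)
    obtain ⟨t, ht⟩ := ih (fun q hq => h q (mem_insert_of_mem hq))
    have hcop : Nat.Coprime a (∏ q ∈ s, q) := by
      refine (Nat.Prime.coprime_iff_not_dvd hap).mpr ?_
      intro hdvd
      obtain ⟨q, hq, hq2⟩ := hap.prime.exists_mem_finset_dvd hdvd
      have := (Nat.prime_dvd_prime_iff_eq hap (h q (mem_insert_of_mem hq)).1).mp hq2
      exact ha (this ▸ hq)
    rw [prod_insert ha, Nat.totient_mul hcop, ht, Nat.totient_prime hap]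
    refine ⟨m + t, ?_⟩
    have h2 : a - 1 = 2 ^ m := by rw [ham, Nat.add_sub_cancel]
    rw [h2, pow_add]

private lemma fuchs_of_totient (n : ℕ) (hn : 0 < n) (s : ℕ) (hs : n.totient = 2 ^ s) :
    ∃ (a k : ℕ) (p : Fin k → ℕ), Function.Injective p ∧
      (∀ i, (p i).Prime ∧ ∃ m : ℕ, 0 < m ∧ p i = 2 ^ m + 1) ∧
      n = 2 ^ a * ∏ i, p i := by
  classical
  set S := n.primeFactors.erase 2 with hSdef
  have hSfact : ∀ q ∈ S, q.Prime ∧ q ∣ n ∧ q ≠ 2 := by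
    intro q hq
    have h1 := Finset.mem_of_mem_erase hq
    exact ⟨Nat.prime_of_mem_primeFactors h1, Nat.dvd_of_mem_primeFactors h1,
      Finset.ne_of_mem_erase hq⟩
  have hq3 : ∀ q ∈ S, 3 ≤ q := by
    intro q hq
    obtain ⟨hp, _, hne⟩ := hSfact q hq
    have := hp.two_le
    omega
  have hfermat : ∀ q ∈ S, ∃ m : ℕ, 0 < m ∧ q = 2 ^ m + 1 := by
    intro q hq
    obtain ⟨hp, hdvd, hne⟩ := hSfact q hq
    have h1 : q.totient ∣ n.totient := Nat.totient_dvd_of_dvd hdvd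
    rw [Nat.totient_prime hp, hs] at h1
    obtain ⟨m, _, hm⟩ := (Nat.dvd_prime_pow Nat.prime_two).mp h1
    have h3 := hq3 q hq
    refine ⟨m, ?_, by omega⟩
    by_contra h0
    simp only [Nat.not_lt, Nat.le_zero] at h0
    subst h0
    simp at hm
    omega
  have hexp : ∀ q ∈ S, n.factorization q = 1 := by
    intro q hq
    obtain ⟨hp, hdvd, hne⟩ := hSfact q hq
    have hpos : 1 ≤ n.factorization q := by
      rw [Nat.one_le_iff_ne_zero, ← Finsupp.mem_support_iff, Nat.support_factorization]
      exact Finset.mem_of_mem_erase hq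
    by_contra hne1
    have h2 : 2 ≤ n.factorization q := by omega
    have hdvd2 : q ^ 2 ∣ n :=
      dvd_trans (pow_dvd_pow q h2) (Nat.ordProj_dvd n q)
    have h3 : (q ^ 2).totient ∣ n.totient := Nat.totient_dvd_of_dvd hdvd2
    rw [Nat.totient_prime_pow hp (by norm_num), hs] at h3
    have hqd : q ∣ 2 ^ s := dvd_trans ⟨q - 1, by ring⟩ h3
    have := hp.dvd_of_dvd_pow hqd
    have := (Nat.prime_dvd_prime_iff_eq hp Nat.prime_two).mp this
    exact hne this
  have hprod : n = 2 ^ (n.factorization 2) * ∏ q ∈ S, q := by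
    have hbase : n = ∏ q ∈ n.primeFactors, q ^ n.factorization q := by
      conv_lhs => rw [← Nat.factorization_prod_pow_eq_self hn.ne']
      rw [Finsupp.prod, Nat.support_factorization]
    have hSprod : ∏ q ∈ S, q ^ n.factorization q = ∏ q ∈ S, q := by
      refine Finset.prod_congr rfl fun q hq => ?_
      rw [hexp q hq, pow_one]
    conv_lhs => rw [hbase]
    by_cases h2 : 2 ∈ n.primeFactors
    · rw [← Finset.mul_prod_erase _ _ h2, ← hSdef, hSprod]
    · have hz : n.factorization 2 = 0 := by
        rw [← Finsupp.notMem_support_iff, Nat.support_factorization]; exact h2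
      rw [hz, pow_zero, one_mul, ← hSprod, hSdef, Finset.erase_eq_of_notMem h2]
  refine ⟨n.factorization 2, S.card, fun i => ((S.equivFin.symm i : ℕ)), ?_, ?_, ?_⟩
  · intro i j hij
    exact S.equivFin.symm.injective (Subtype.ext hij)
  · intro i
    have hmem := (S.equivFin.symm i).2
    exact ⟨(hSfact _ hmem).1, hfermat _ hmem⟩
  · have heq : (∏ i, ((S.equivFin.symm i : ℕ))) = ∏ q ∈ S, q := by
      rw [← Finset.prod_coe_sort S (fun q => q)]
      exact Equiv.prod_comp S.equivFin.symm (fun x : S => (x : ℕ))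
    rw [heq]
    exact hprod

private lemma fuchs_totient_of (a k : ℕ) (p : Fin k → ℕ) (hinj : Function.Injective p)
    (hp : ∀ i, (p i).Prime ∧ ∃ m : ℕ, 0 < m ∧ p i = 2 ^ m + 1) :
    ∃ s : ℕ, (2 ^ a * ∏ i, p i).totient = 2 ^ s := by
  classical
  have hodd : ∀ i, ¬ (2 ∣ p i) := by
    intro i
    obtain ⟨_, m, hm, hf⟩ := hp i
    have : (2 : ℕ) ∣ 2 ^ m := dvd_pow_self 2 hm.ne'
    omega
  have hcop : Nat.Coprime (2 ^ a) (∏ i, p i) := by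
    refine Nat.Coprime.pow_left a (Nat.Coprime.prod_right fun i _ => ?_)
    exact (Nat.Prime.coprime_iff_not_dvd Nat.prime_two).mpr (hodd i)
  have hT : (∏ i, p i) = ∏ q ∈ Finset.image p Finset.univ, q := by
    rw [Finset.prod_image (fun i _ j _ h => hinj h)]
  obtain ⟨t, ht⟩ : ∃ t, (∏ i, p i).totient = 2 ^ t := by
    rw [hT]
    refine totient_prod_fermat _ fun q hq => ?_
    obtain ⟨i, _, rfl⟩ := Finset.mem_image.mp hq
    exact hp i
  obtain ⟨u, hu⟩ : ∃ u, (2 ^ a : ℕ).totient = 2 ^ u := by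
    rcases Nat.eq_zero_or_pos a with rfl | ha
    · exact ⟨0, by simp⟩
    · exact ⟨a - 1, by rw [Nat.totient_prime_pow Nat.prime_two ha]; ring⟩
  exact ⟨u + t, by rw [Nat.totient_mul hcop, ht, hu, pow_add]⟩

/-- There exists a ring `R` of characteristic `n > 0` whose group of units is a `2`-group
(every unit has order a power of `2`) if and only if `n = 2^a * p₁ * ⋯ * p_k` where the
`pᵢ` are distinct Fermat primes. -/
theorem fuchs_two_group_characteristic (n : ℕ) (hn : 0 < n) :
    (∃ (R : Type) (_ : Ring R), CharP R n ∧ ∀ u : Rˣ, ∃ m : ℕ, orderOf u = 2 ^ m) ↔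
    (∃ (a k : ℕ) (p : Fin k → ℕ), Function.Injective p ∧
      (∀ i, (p i).Prime ∧ ∃ m : ℕ, 0 < m ∧ p i = 2 ^ m + 1) ∧
      n = 2 ^ a * ∏ i, p i) := by
  haveI : NeZero n := ⟨hn.ne'⟩
  constructor
  · rintro ⟨R, _, hchar, hord⟩
    haveI := hchar
    have hinj : Function.Injective (ZMod.castHom (dvd_refl n) R) :=
      ZMod.castHom_injective R
    have key : ∀ u : (ZMod n)ˣ, ∃ m : ℕ, orderOf u = 2 ^ m := by
      intro u
      obtain ⟨m, hm⟩ := hord (Units.map (ZMod.castHom (dvd_refl n) R).toMonoidHom u)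
      refine ⟨m, ?_⟩
      rwa [orderOf_injective _ (Units.map_injective hinj) u] at hm
    have hpg : IsPGroup 2 (ZMod n)ˣ := by
      intro u
      obtain ⟨m, hm⟩ := key u
      exact ⟨m, by rw [← hm]; exact pow_orderOf_eq_one u⟩
    haveI : Fact (Nat.Prime 2) := ⟨Nat.prime_two⟩
    obtain ⟨s, hs⟩ := IsPGroup.iff_card.mp hpg
    rw [Nat.card_eq_fintype_card, ZMod.card_units_eq_totient] at hs
    obtain ⟨a, k, p, h1, h2, h3⟩ := fuchs_of_totient n hn s hs
    exact ⟨a, k, p, h1, h2, h3⟩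
  · rintro ⟨a, k, p, hinj, hp, rfl⟩
    obtain ⟨s, hs⟩ := fuchs_totient_of a k p hinj hp
    refine ⟨ZMod (2 ^ a * ∏ i, p i), inferInstance, ZMod.charP _, fun u => ?_⟩
    have hdvd : orderOf u ∣ 2 ^ s := by
      rw [← hs, ← ZMod.card_units_eq_totient]
      exact orderOf_dvd_card
    obtain ⟨m, _, hm⟩ := (Nat.dvd_prime_pow Nat.prime_two).mp hdvd
    exact ⟨m, hm⟩
end

section
/- A finite 2-group G is the group of units of some ring of odd characteristic if and only if G is isomorphic to C_8^t × ∏_{i=1}^k C_{2^{n_i}}^{s_i}, where t and the s_i are nonnegative integers and 2^{n_i} + 1 is a Fermat prime for every i. -/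
/-!
The units of `R` span a subring `T` with `Tˣ = Rˣ`, finite because the characteristic is positive.
`T` is reduced: if `a ^ 2 = 0` then `1 + a` is a unit with `(1 + a) ^ N = 1 + N • a`, so `a` is
killed both by a power of `2` and by the odd characteristic. By Artin–Wedderburn and Wedderburn's
little theorem a finite reduced ring is a product of finite fields `F`, and `Fˣ` is cyclic of order
`q - 1 = 2 ^ m`; writing `q = p ^ r`, the equation `p ^ r = 2 ^ m + 1` forces `r = 1` (a Fermat
prime) or `q = 9` (a factor `C₈`). Conversely `𝔽₉ˣ ≅ C₈` and `(ℤ/p)ˣ ≅ C_{p-1}`, so products of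
copies of `𝔽₉` and of `ℤ/p` realise every such group.
-/

-- `(x - 1)(x + 1) = 2 ^ m` makes `x - 1` and `x + 1` powers of two that differ by `2`.
theorem Nat.eq_three_of_mul_self_eq_two_pow_add_one {x m : ℕ} (hx : Odd x)
    (h : x * x = 2 ^ m + 1) : x = 3 := by
  have hx1 : 1 ≤ x := hx.pos
  have hprod : (x - 1) * (x + 1) = 2 ^ m := by zify [hx1] at h ⊢; linarith
  obtain ⟨a, -, ha⟩ := (Nat.dvd_prime_pow Nat.prime_two).mp (Dvd.intro _ hprod)
  obtain ⟨b, -, hb⟩ := (Nat.dvd_prime_pow Nat.prime_two).mp (Dvd.intro_left _ hprod)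
  have hab : a ≤ b := (Nat.pow_le_pow_iff_right one_lt_two).mp (by rw [← ha, ← hb]; omega)
  have ha1 : a ≤ 1 := by
    have := Nat.pow_dvd_pow 2 hab
    rw [← hb, show x + 1 = (x - 1) + 2 by omega, ha] at this
    exact (Nat.pow_dvd_pow_iff_le_right one_lt_two).mp
      (by simpa using (Nat.dvd_add_right dvd_rfl).mp this)
  have ha0 : a ≠ 0 := by
    rintro rfl
    exact Nat.not_even_iff_odd.mpr hx (by rw [show x = 2 by simp at ha; omega]; exact even_two)
  obtain rfl : a = 1 := by omega
  rw [pow_one] at ha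
  omega

theorem Nat.eq_one_or_eq_three_of_pow_eq_two_pow_add_one {p r m : ℕ} (hp : p.Prime) (hr : r ≠ 0)
    (h : p ^ r = 2 ^ m + 1) : r = 1 ∨ m = 3 := by
  rcases Nat.eq_zero_or_pos m with rfl | hm
  · exact .inl (Nat.prime_two.pow_eq_iff.mp (by simpa using h)).2
  have hp_odd : Odd p :=
    (Nat.odd_pow_iff hr).mp (h ▸ (Nat.even_pow.mpr ⟨even_two, hm.ne'⟩).add_one)
  rcases Nat.even_or_odd r with ⟨k, rfl⟩ | hr_odd
  · have h3 := Nat.eq_three_of_mul_self_eq_two_pow_add_one hp_odd.pow (by rw [← pow_add]; exact h)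
    rw [pow_add, h3] at h
    exact .inr (Nat.pow_right_injective le_rfl (by simpa using h.symm))
  -- the odd cofactor `∑ p ^ i` of `p ^ r - 1 = 2 ^ m` must be `1`
  left
  set S := ∑ i ∈ Finset.range r, p ^ i
  have hS : S * (p - 1) = 2 ^ m := by
    have := geom_sum_mul_add (p - 1) r
    rw [Nat.sub_add_cancel hp.one_le, h] at this
    exact Nat.add_right_cancel this
  have hS_odd : Odd S := by
    rw [Finset.odd_sum_iff_odd_card_odd, Finset.filter_true_of_mem fun i _ => hp_odd.pow,
      Finset.card_range]
    exact hr_odd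
  have hS1 : S = 1 :=
    Nat.Coprime.eq_one_of_dvd (hS_odd.coprime_two_right.pow_right m) (Dvd.intro _ hS)
  rw [hS1, one_mul] at hS
  refine Nat.pow_right_injective hp.two_le (?_ : p ^ r = p ^ 1)
  rw [pow_one, h, ← hS, Nat.sub_add_cancel hp.one_le]

def MulEquiv.piCongrLeft' {ι ι' : Type*} (M : ι → Type*) [∀ i, Mul (M i)] (e : ι ≃ ι') :
    (∀ i, M i) ≃* ∀ i', M (e.symm i') :=
  { Equiv.piCongrLeft' M e with map_mul' := fun _ _ => rfl }

def MulEquiv.sumPiEquivProdPi {ι ι' : Type*} (M : ι ⊕ ι' → Type*) [∀ i, Mul (M i)] :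
    (∀ i, M i) ≃* (∀ i, M (.inl i)) × (∀ i', M (.inr i')) :=
  { Equiv.sumPiEquivProdPi M with map_mul' := fun _ _ => rfl }

def MulEquiv.piFinSucc {n : ℕ} (M : Fin (n + 1) → Type*) [∀ i, Mul (M i)] :
    (∀ i, M i) ≃* M 0 × ∀ i : Fin n, M i.succ :=
  { (Fin.consEquiv M).symm with map_mul' := fun _ _ => rfl }

-- The groups of the theorem, indexed by arbitrary finite types: a factor repeated `s i` times
-- is just repeated in `ι`.
def IsFuchsProduct (H : Type*) [Group H] : Prop :=
  ∃ (κ ι : Type) (_ : Finite κ) (_ : Finite ι) (n : ι → ℕ), (∀ i, 0 < n i ∧ (2 ^ n i + 1).Prime) ∧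
    Nonempty (H ≃* (κ → Multiplicative (ZMod 8)) × ∀ i, Multiplicative (ZMod (2 ^ n i)))

namespace IsFuchsProduct

variable {H H' : Type*} [Group H] [Group H']

theorem of_mulEquiv (e : H ≃* H') (h : IsFuchsProduct H') : IsFuchsProduct H :=
  let ⟨κ, ι, hκ, hι, n, hn, ⟨f⟩⟩ := h
  ⟨κ, ι, hκ, hι, n, hn, ⟨e.trans f⟩⟩

theorem of_subsingleton [Subsingleton H] : IsFuchsProduct H :=
  let _ : Unique H := uniqueOfSubsingleton 1
  ⟨Empty, Empty, inferInstance, inferInstance, Empty.elim, (·.elim),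
    ⟨MulEquiv.ofUnique.trans MulEquiv.prodUnique.symm⟩⟩

theorem prod (h : IsFuchsProduct H) (h' : IsFuchsProduct H') : IsFuchsProduct (H × H') := by
  obtain ⟨κ, ι, _, _, n, hn, ⟨f⟩⟩ := h
  obtain ⟨κ', ι', _, _, n', hn', ⟨f'⟩⟩ := h'
  refine ⟨κ ⊕ κ', ι ⊕ ι', inferInstance, inferInstance, Sum.elim n n',
    Sum.forall.mpr ⟨hn, hn'⟩, ⟨?_⟩⟩
  exact (f.prodCongr f').trans <| (MulEquiv.prodProdProdComm _ _ _ _).trans <|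
    MulEquiv.prodCongr (MulEquiv.sumPiEquivProdPi fun _ => Multiplicative (ZMod 8)).symm
      (MulEquiv.sumPiEquivProdPi fun i => Multiplicative (ZMod (2 ^ Sum.elim n n' i))).symm

theorem pi : ∀ {n : ℕ} {H : Fin n → Type*} [∀ i, Group (H i)],
    (∀ i, IsFuchsProduct (H i)) → IsFuchsProduct (∀ i, H i)
  | 0, _, _, _ => of_subsingleton
  | _ + 1, _, _, h => ((h 0).prod (pi fun i => h i.succ)).of_mulEquiv (MulEquiv.piFinSucc _)

theorem of_isCyclic [IsCyclic H] {m : ℕ} (hH : Nat.card H = 2 ^ m)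
    (hq : IsPrimePow (2 ^ m + 1)) : IsFuchsProduct H := by
  obtain ⟨p, r, hp, hr, hpr⟩ := hq
  rcases Nat.eq_one_or_eq_three_of_pow_eq_two_pow_add_one (Nat.prime_iff.mpr hp) hr.ne' hpr
    with rfl | rfl
  · obtain rfl : p = 2 ^ m + 1 := by simpa using hpr
    rcases Nat.eq_zero_or_pos m with rfl | hm
    · have := (Nat.card_eq_one_iff_unique.mp hH).1
      exact of_subsingleton
    refine ⟨Empty, Unit, inferInstance, inferInstance, fun _ => m,
      fun _ => ⟨hm, Nat.prime_iff.mpr hp⟩, ⟨?_⟩⟩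
    exact (mulEquivOfCyclicCardEq (by simp [hH])).trans <|
      (MulEquiv.funUnique _ _).symm.trans MulEquiv.uniqueProd.symm
  · refine ⟨Unit, Empty, inferInstance, inferInstance, Empty.elim, (·.elim), ⟨?_⟩⟩
    exact (mulEquivOfCyclicCardEq (by simp [hH])).trans <|
      (MulEquiv.funUnique _ _).symm.trans MulEquiv.prodUnique.symm

theorem exists_fin_mulEquiv (h : IsFuchsProduct H) :
    ∃ (t k : ℕ) (nn s : Fin k → ℕ), (∀ i, 0 < nn i ∧ (2 ^ nn i + 1).Prime) ∧
      Nonempty (H ≃* (Fin t → Multiplicative (ZMod 8)) ×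
        ((i : Fin k) → Fin (s i) → Multiplicative (ZMod (2 ^ nn i)))) := by
  obtain ⟨κ, ι, _, _, n, hn, ⟨f⟩⟩ := h
  let eκ := Finite.equivFin κ
  let eι := Finite.equivFin ι
  refine ⟨Nat.card κ, Nat.card ι, n ∘ eι.symm, fun _ => 1, fun i => hn _, ⟨?_⟩⟩
  exact f.trans <| MulEquiv.prodCongr (MulEquiv.arrowCongr eκ (.refl _)) <|
    (MulEquiv.piCongrLeft' _ eι).trans <|
      MulEquiv.piCongrRight fun _ => (MulEquiv.funUnique _ _).symm

end IsFuchsProduct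

universe u

theorem IsReduced.of_pi {ι : Type*} [DecidableEq ι] {R : ι → Type*} [∀ i, MonoidWithZero (R i)]
    [IsReduced (∀ i, R i)] (i : ι) : IsReduced (R i) := by
  refine (isReduced_iff_pow_one_lt 2 one_lt_two).mpr fun x hx => ?_
  have hsingle : Pi.single i x ^ 2 = 0 := by rw [sq, ← Pi.single_mul, ← sq, hx, Pi.single_zero]
  simpa using congr_fun (IsReduced.eq_zero _ ⟨2, hsingle⟩) i

theorem Matrix.dim_eq_one_of_isReduced {D : Type*} [Ring D] [Nontrivial D] {d : ℕ} [NeZero d]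
    [IsReduced (Matrix (Fin d) (Fin d) D)] : d = 1 := by
  by_contra hd
  have h1 : 1 < d := by have := NeZero.ne d; omega
  let x : Matrix (Fin d) (Fin d) D := Matrix.single 0 ⟨1, h1⟩ 1
  have hx : x ^ 2 = 0 := by simp [x, sq, Matrix.single_mul_single_of_ne]
  simpa [x] using congr_fun₂ (IsReduced.eq_zero x ⟨2, hx⟩) 0 ⟨1, h1⟩

theorem isSemisimpleRing_of_isArtinianRing_of_isReduced {R : Type*} [Ring R] [IsArtinianRing R]
    [IsReduced R] : IsSemisimpleRing R := by
  obtain ⟨n, hn⟩ := IsSemiprimaryRing.isNilpotent (R := R)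
  refine IsArtinianRing.isSemisimpleRing_iff_jacobson.mpr (eq_bot_iff.mpr fun x hx => ?_)
  have := Ideal.pow_mem_pow hx n
  rw [hn] at this
  exact IsReduced.eq_zero x ⟨n, this⟩

theorem exists_ringEquiv_pi_field_of_isReduced (R : Type u) [Ring R] [Finite R] [IsReduced R] :
    ∃ (n : ℕ) (F : Fin n → Type u) (_ : ∀ i, Field (F i)) (_ : ∀ i, Finite (F i)),
      Nonempty (R ≃+* ∀ i, F i) := by
  have := isSemisimpleRing_of_isArtinianRing_of_isReduced (R := R)
  obtain ⟨n, D, d, _, hd, ⟨e⟩⟩ := IsSemisimpleRing.exists_ringEquiv_pi_matrix_divisionRing R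
  have : IsReduced (∀ i, Matrix (Fin (d i)) (Fin (d i)) (D i)) :=
    isReduced_of_injective e.symm e.symm.injective
  have hd1 (i : Fin n) : d i = 1 := by
    have := IsReduced.of_pi (R := fun i => Matrix (Fin (d i)) (Fin (d i)) (D i)) i
    exact Matrix.dim_eq_one_of_isReduced (D := D i)
  obtain rfl : d = fun _ => 1 := funext hd1
  let e' : R ≃+* ∀ i, D i := e.trans (RingEquiv.piCongrRight fun _ => Matrix.uniqueRingEquiv)
  have : Finite (∀ i, D i) := Finite.of_equiv R e'
  have (i : Fin n) : Finite (D i) := Finite.of_surjective _ (Function.surjective_eval i)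
  exact ⟨n, D, fun i => littleWedderburn (D i), inferInstance, ⟨e'⟩⟩

theorem one_add_pow_of_sq_eq_zero {R : Type*} [Ring R] {a : R} (ha : a ^ 2 = 0) (n : ℕ) :
    (1 + a) ^ n = 1 + n • a := by
  induction n with
  | zero => simp
  | succ n ih =>
    rw [pow_succ, ih, mul_add, mul_one, add_mul, one_mul, smul_mul_assoc, ← sq, ha, smul_zero,
      add_zero, succ_nsmul]
    abel

theorem isReduced_of_odd_charP_of_pow_units_eq_one {R : Type*} [Ring R] {c e : ℕ} [CharP R c]
    (hc : Odd c) (hR : ∀ u : Rˣ, u ^ 2 ^ e = 1) : IsReduced R := by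
  refine (isReduced_iff_pow_one_lt 2 one_lt_two).mpr fun a ha => ?_
  have h2 : (2 ^ e : ℕ) • a = 0 := by
    have := congrArg Units.val (hR (IsNilpotent.isUnit_one_add ⟨2, ha⟩).unit)
    simpa [one_add_pow_of_sq_eq_zero ha] using this
  have hc' : c • a = 0 := by rw [nsmul_eq_mul, CharP.cast_eq_zero, zero_mul]
  have : addOrderOf a = 1 := Nat.Coprime.eq_one_of_dvd
    (Nat.Coprime.coprime_dvd_left (addOrderOf_dvd_of_nsmul_eq_zero h2)
      (Nat.Coprime.pow_left e hc.coprime_two_right.symm))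
    (addOrderOf_dvd_of_nsmul_eq_zero hc')
  exact AddMonoid.addOrderOf_eq_one_iff.mp this

theorem Subring.finite_closure_submonoid {R : Type*} [Ring R] {c : ℕ} [CharP R c] (hc : c ≠ 0)
    (M : Submonoid R) [Finite M] : Finite (Subring.closure (M : Set R)) := by
  have hA : Finite (AddSubgroup.closure (M : Set R)) := by
    refine AddCommGroup.finite_of_fg_isAddTorsion _ fun x => ?_
    refine isOfFinAddOrder_iff_nsmul_eq_zero.mpr ⟨c, Nat.pos_of_ne_zero hc, Subtype.ext ?_⟩
    simp
  have hcl : (Subring.closure (M : Set R) : Set R) = AddSubgroup.closure (M : Set R) := by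
    ext; simp [Subring.mem_closure_iff, Submonoid.closure_eq]
  exact Set.Finite.to_subtype (hcl ▸ Set.toFinite _)

noncomputable def Subring.unitsMulEquivOfForallMem {R : Type*} [Ring R] (S : Subring R)
    (hS : ∀ u : Rˣ, (u : R) ∈ S) : Sˣ ≃* Rˣ :=
  .ofBijective (Units.map S.subtype.toMonoidHom)
    ⟨fun _ _ h => Units.ext (Subtype.ext (congrArg Units.val h)),
     fun u => ⟨⟨⟨u, hS u⟩, ⟨↑u⁻¹, hS u⁻¹⟩, Subtype.ext u.mul_inv, Subtype.ext u.inv_mul⟩,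
       Units.ext rfl⟩⟩

theorem odd_ringChar_of_odd_natCard {R : Type*} [Ring R] [Finite R] (h : Odd (Nat.card R)) :
    Odd (ringChar R) :=
  h.of_dvd_nat (ringChar.dvd (by rw [← nsmul_one, card_nsmul_eq_zero']))

noncomputable def Units.mulEquivOfNatCardEq (F : Type*) [Field F] [Finite F] {n : ℕ}
    (h : Nat.card F = n + 1) : Fˣ ≃* Multiplicative (ZMod n) :=
  mulEquivOfCyclicCardEq (by simp [Nat.card_units, h, Nat.card_congr Multiplicative.toAdd])

namespace IsFuchsProduct

theorem units_of_field (F : Type*) [Field F] [Finite F] {m : ℕ} (hF : Nat.card Fˣ = 2 ^ m) :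
    IsFuchsProduct Fˣ := by
  have _ := Fintype.ofFinite F
  refine of_isCyclic hF ?_
  have hcard : Nat.card F = 2 ^ m + 1 := by
    rw [← hF, Nat.card_units, Nat.sub_add_cancel Nat.card_pos]
  rw [← hcard, Nat.card_eq_fintype_card]
  exact FiniteField.isPrimePow_card F

theorem units_of_isReduced (T : Type*) [Ring T] [Finite T] [IsReduced T] {e : ℕ}
    (hT : Nat.card Tˣ = 2 ^ e) : IsFuchsProduct Tˣ := by
  obtain ⟨n, F, _, _, ⟨φ⟩⟩ := exists_ringEquiv_pi_field_of_isReduced T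
  let ψ : Tˣ ≃* ∀ i, (F i)ˣ := (Units.mapEquiv φ.toMulEquiv).trans MulEquiv.piUnits
  refine (pi fun i => ?_).of_mulEquiv ψ
  have hdvd : Nat.card (F i)ˣ ∣ 2 ^ e := by
    rw [← hT, Nat.card_congr ψ.toEquiv, Nat.card_pi]
    exact Finset.dvd_prod_of_mem _ (Finset.mem_univ i)
  obtain ⟨m, -, hm⟩ := (Nat.dvd_prime_pow Nat.prime_two).mp hdvd
  exact units_of_field (F i) hm

theorem units_of_odd_charP (R : Type*) [Ring R] {c : ℕ} [CharP R c] (hc : Odd c) [Finite Rˣ]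
    {e : ℕ} (hR : Nat.card Rˣ = 2 ^ e) : IsFuchsProduct Rˣ := by
  have : IsReduced R := isReduced_of_odd_charP_of_pow_units_eq_one hc fun u => by
    rw [← hR]; exact pow_card_eq_one'
  have : Finite (MonoidHom.mrange (Units.coeHom R)) :=
    .of_surjective _ (MonoidHom.mrangeRestrict_surjective _)
  let T := Subring.closure (MonoidHom.mrange (Units.coeHom R) : Set R)
  have : Finite T := Subring.finite_closure_submonoid hc.pos.ne' _
  have : IsReduced T := isReduced_of_injective T.subtype Subtype.val_injective
  let ψ := T.unitsMulEquivOfForallMem fun u => Subring.subset_closure ⟨u, rfl⟩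
  exact (units_of_isReduced T (by rw [Nat.card_congr ψ.toEquiv, hR])).of_mulEquiv ψ.symm

end IsFuchsProduct

theorem exists_odd_charP_units_mulEquiv (t k : ℕ) (nn s : Fin k → ℕ)
    (hnn : ∀ i, 0 < nn i ∧ (2 ^ nn i + 1).Prime) :
    ∃ (R : Type) (_ : Ring R) (c : ℕ), Odd c ∧ CharP R c ∧
      Nonempty (Rˣ ≃* (Fin t → Multiplicative (ZMod 8)) ×
        ((i : Fin k) → Fin (s i) → Multiplicative (ZMod (2 ^ nn i)))) := by
  have : Fact (Nat.Prime 3) := ⟨Nat.prime_three⟩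
  have (i : Fin k) : Fact (2 ^ nn i + 1).Prime := ⟨(hnn i).2⟩
  let R := (Fin t → GaloisField 3 2) × ∀ i, Fin (s i) → ZMod (2 ^ nn i + 1)
  have hR : Odd (Nat.card R) := by
    simp only [R, Nat.card_prod, Nat.card_pi, Nat.card_zmod, Finset.prod_const,
      Finset.card_univ, Fintype.card_fin, GaloisField.card 3 2 two_ne_zero]
    refine (Odd.pow (by decide)).mul (Finset.prod_induction _ Odd (fun _ _ => Odd.mul) odd_one
      fun i _ => Odd.pow ?_)
    exact (Nat.even_pow.mpr ⟨even_two, (hnn i).1.ne'⟩).add_one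
  refine ⟨R, inferInstance, ringChar R, odd_ringChar_of_odd_natCard hR, ringChar.charP R, ⟨?_⟩⟩
  exact MulEquiv.prodUnits.trans <| MulEquiv.prodCongr
    (MulEquiv.piUnits.trans <| MulEquiv.piCongrRight fun _ =>
      Units.mulEquivOfNatCardEq _ (GaloisField.card 3 2 two_ne_zero))
    (MulEquiv.piUnits.trans <| MulEquiv.piCongrRight fun i => MulEquiv.piUnits.trans <|
      MulEquiv.piCongrRight fun _ => Units.mulEquivOfNatCardEq _ (Nat.card_zmod _))

/-- A finite 2-group `G` is the group of units of a ring of odd characteristic iff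
`G ≅ C₈ᵗ × ∏ᵢ C_{2^{nᵢ}}^{sᵢ}` where each `2^{nᵢ} + 1` is a Fermat prime. -/
theorem fuchs_two_group_odd_char (G : Type) [Group G] [Fintype G]
    (hG : ∃ e : ℕ, Fintype.card G = 2 ^ e) :
    (∃ (R : Type) (_ : Ring R) (c : ℕ), Odd c ∧ CharP R c ∧ Nonempty (Rˣ ≃* G)) ↔
    (∃ (t k : ℕ) (nn s : Fin k → ℕ), (∀ i, 0 < nn i ∧ (2 ^ nn i + 1).Prime) ∧
      Nonempty (G ≃* (Fin t → Multiplicative (ZMod 8)) ×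
        ((i : Fin k) → Fin (s i) → Multiplicative (ZMod (2 ^ nn i))))) := by
  obtain ⟨e, hG⟩ := hG
  constructor
  · rintro ⟨R, _, c, hc, _, ⟨φ⟩⟩
    have : Finite Rˣ := Finite.of_equiv G φ.symm
    have hR : Nat.card Rˣ = 2 ^ e := by rw [Nat.card_congr φ.toEquiv, Nat.card_eq_fintype_card, hG]
    exact ((IsFuchsProduct.units_of_odd_charP R hc hR).of_mulEquiv φ.symm).exists_fin_mulEquiv
  · rintro ⟨t, k, nn, s, hnn, ⟨φ⟩⟩
    obtain ⟨R, _, c, hc, hR, ⟨ψ⟩⟩ := exists_odd_charP_units_mulEquiv t k nn s hnn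
    exact ⟨R, inferInstance, c, hc, hR, ⟨ψ.trans φ.symm⟩⟩
end

section
/- If n is a positive integer and G is a finite abelian 2-group of rank n that is the group of units of some ring of characteristic 2, then every element x of G has order at most 4n. Consequently, for each positive integer n there are, up to isomorphism, only finitely many finite abelian 2-groups of rank n that are the group of units of a ring of characteristic 2. -/
open scoped symmDiff


-- 2-torsion in ZMod (2^c) has at most 2 elements
lemma two_torsion_zmod_card (c : ℕ) (hc : 0 < c) :
    Nat.card {y : Multiplicative (ZMod (2 ^ c)) // y * y = 1} ≤ 2 := by
  haveI : NeZero (2 ^ c) := ⟨by positivity⟩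
  have key : ∀ y : ZMod (2 ^ c), y + y = 0 → y.val ≠ 0 → y.val = 2 ^ (c - 1) := by
    intro y hy hy0
    have h1 : ((2 * y.val : ℕ) : ZMod (2 ^ c)) = 0 := by
      push_cast
      rw [ZMod.natCast_zmod_val, two_mul, hy]
    rw [ZMod.natCast_eq_zero_iff] at h1
    have hc2 : 2 ^ c = 2 * 2 ^ (c - 1) := by
      rw [← pow_succ']
      congr 1
      omega
    obtain ⟨d, hd⟩ := h1
    have hval : y.val = 2 ^ (c - 1) * d := by
      apply Nat.eq_of_mul_eq_mul_left (show 0 < 2 by norm_num)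
      rw [hd, hc2]; ring
    have h3 : y.val < 2 ^ c := ZMod.val_lt y
    have hd2 : d < 2 := by
      by_contra h
      push_neg at h
      have h4 : 2 ^ (c - 1) * 2 ≤ 2 ^ (c - 1) * d := Nat.mul_le_mul_left _ h
      rw [← hval] at h4
      omega
    have hd0 : d ≠ 0 := fun h => hy0 (by simpa [h] using hval)
    have hd1 : d = 1 := by omega
    subst hd1
    simpa using hval
  have hinj : Function.Injective
      (fun y : {y : Multiplicative (ZMod (2 ^ c)) // y * y = 1} =>
        (decide ((Multiplicative.toAdd y.1).val = 0) : Bool)) := by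
    rintro ⟨y, hy⟩ ⟨z, hz⟩ h
    simp only [decide_eq_decide] at h
    have hy' : Multiplicative.toAdd y + Multiplicative.toAdd y = 0 := hy
    have hz' : Multiplicative.toAdd z + Multiplicative.toAdd z = 0 := hz
    ext
    by_cases h0 : (Multiplicative.toAdd y).val = 0
    · have h1 : (Multiplicative.toAdd z).val = 0 := h.mp h0
      have := ZMod.val_injective _ (h0.trans h1.symm)
      exact this
    · have h1 : (Multiplicative.toAdd z).val ≠ 0 := fun hh => h0 (h.mpr hh)
      have := (key _ hy' h0).trans (key _ hz' h1).symm
      exact ZMod.val_injective _ this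
  calc Nat.card {y : Multiplicative (ZMod (2 ^ c)) // y * y = 1}
      ≤ Nat.card Bool := Nat.card_le_card_of_injective _ hinj
    _ = 2 := by simp [Nat.card_eq_fintype_card]


lemma two_torsion_pi_card (n : ℕ) (c : Fin n → ℕ) (hc : ∀ i, 0 < c i) :
    Nat.card {g : (i : Fin n) → Multiplicative (ZMod (2 ^ c i)) // g * g = 1} ≤ 2 ^ n := by
  have e1 : {g : (i : Fin n) → Multiplicative (ZMod (2 ^ c i)) // g * g = 1} ≃
      {g : (i : Fin n) → Multiplicative (ZMod (2 ^ c i)) // ∀ i, g i * g i = 1} :=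
    Equiv.subtypeEquivRight (fun g => by
      constructor
      · intro h i; exact congrFun h i
      · intro h; funext i; exact h i)
  have e2 : {g : (i : Fin n) → Multiplicative (ZMod (2 ^ c i)) // ∀ i, g i * g i = 1} ≃
      ((i : Fin n) → {y : Multiplicative (ZMod (2 ^ c i)) // y * y = 1}) :=
    Equiv.subtypePiEquivPi (p := fun i (y : Multiplicative (ZMod (2 ^ c i))) => y * y = 1)
  rw [Nat.card_congr (e1.trans e2), Nat.card_pi]
  calc (∏ i : Fin n, Nat.card {y : Multiplicative (ZMod (2 ^ c i)) // y * y = 1})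
      ≤ ∏ _i : Fin n, 2 :=
        Finset.prod_le_prod' (fun i _ => two_torsion_zmod_card (c i) (hc i))
    _ = 2 ^ n := by simp


lemma char2_involutions (R : Type) [Ring R] [CharP R 2] (v : R) (k : ℕ) (hk : 2 ≤ k)
    (h1 : v ^ 2 ^ k = 1) (h2 : v ^ 2 ^ (k - 1) ≠ 1) :
    ∃ φ : Finset (Fin (2 ^ (k - 2))) → Rˣ,
      Function.Injective φ ∧ ∀ S, φ S * φ S = 1 := by
  set a := v + 1 with ha_def
  -- Frobenius: a ^ 2 ^ j = v ^ 2 ^ j + 1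
  have hpow : ∀ j, a ^ 2 ^ j = v ^ 2 ^ j + 1 := by
    intro j
    induction j with
    | zero => simp [ha_def]
    | succ j ih =>
      have hself : v ^ 2 ^ j + v ^ 2 ^ j = 0 := CharTwo.add_self_eq_zero _
      have expand : (v ^ 2 ^ j + 1) * (v ^ 2 ^ j + 1)
          = v ^ 2 ^ j * v ^ 2 ^ j + (v ^ 2 ^ j + v ^ 2 ^ j) + 1 := by noncomm_ring
      rw [pow_succ (2 : ℕ) j, pow_mul, ih, sq, expand, hself, add_zero,
        ← sq, ← pow_mul, ← pow_succ]
  have hak : a ^ 2 ^ k = 0 := by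
    rw [hpow, h1]
    exact CharTwo.add_self_eq_zero 1
  have hak' : a ^ 2 ^ (k - 1) ≠ 0 := by
    rw [hpow]
    intro h
    apply h2
    have := CharTwo.neg_eq (R := R) 1
    have h' : v ^ 2 ^ (k - 1) = -1 := eq_neg_of_add_eq_zero_left h
    rw [h', this]
  -- nilpotency index m
  have hex : ∃ m, a ^ m = 0 := ⟨2 ^ k, hak⟩
  haveI : DecidablePred fun i => a ^ i = 0 := Classical.decPred _
  set m := Nat.find hex with hm_def
  have hm0 : a ^ m = 0 := Nat.find_spec hex
  have hmlt : ∀ i, i < m → a ^ i ≠ 0 := fun i hi => Nat.find_min hex hi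
  have hge : ∀ i, m ≤ i → a ^ i = 0 := by
    intro i hi
    rw [show i = m + (i - m) by omega, pow_add, hm0, zero_mul]
  have hmgt : 2 ^ (k - 1) < m := by
    by_contra h
    push_neg at h
    exact hak' (hge _ h)
  set r := 2 ^ (k - 2) with hr_def
  have hr1 : 1 ≤ r := Nat.one_le_two_pow
  have hrm : 2 * r < m := by
    have : 2 ^ (k - 1) = 2 * 2 ^ (k - 2) := by
      rw [show k - 1 = (k - 2) + 1 by omega, pow_succ]; ring
    omega
  set t := m - r with ht_def
  -- the sums
  set w : Finset (Fin r) → R := fun S => ∑ j ∈ S, a ^ (t + j.val) with hw_def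
  have hww : ∀ S T : Finset (Fin r), w S * w T = 0 := by
    intro S T
    rw [hw_def]
    simp only
    rw [Finset.sum_mul_sum]
    apply Finset.sum_eq_zero
    intro i _
    apply Finset.sum_eq_zero
    intro j _
    rw [← pow_add]
    exact hge _ (by omega)
  have hwzero : ∀ S : Finset (Fin r), w S = 0 → S = ∅ := by
    intro S hS
    by_contra hne
    have hSne : S.Nonempty := Finset.nonempty_iff_ne_empty.mpr hne
    set j0 := S.min' hSne with hj0_def
    have hj0 : j0 ∈ S := S.min'_mem hSne
    have hj0r : j0.val < r := j0.2
    have key : w S * a ^ (m - 1 - (t + j0.val)) = a ^ (m - 1) := by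
      rw [hw_def]
      simp only
      rw [Finset.sum_mul]
      rw [Finset.sum_eq_single j0]
      · rw [← pow_add]
        congr 1
        omega
      · intro b hb hbne
        rw [← pow_add]
        apply hge
        have hle : j0 ≤ b := S.min'_le b hb
        have : j0.val < b.val := lt_of_le_of_ne hle (fun hh => hbne (Fin.ext hh.symm ▸ rfl)) 
        omega
      · intro h; exact absurd hj0 h
    rw [hS, zero_mul] at key
    exact hmlt (m - 1) (by omega) key.symm
  have hwinj : Function.Injective w := by
    intro S T h
    have hadd : w (S ∆ T) = 0 := by
      have hdisj : Disjoint (S ∆ T) (S ∩ T) := by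
        simpa [Finset.inf_eq_inter] using (disjoint_symmDiff_inf (a := S) (b := T))
      have hun : S ∆ T ∪ (S ∩ T) = S ∪ T := by
        simpa [Finset.sup_eq_union, Finset.inf_eq_inter] using (symmDiff_sup_inf (a := S) (b := T))
      have e1 : w (S ∪ T) + w (S ∩ T) = w S + w T := Finset.sum_union_inter
      have e2 : w (S ∪ T) = w (S ∆ T) + w (S ∩ T) := by
        rw [← hun]; exact Finset.sum_union hdisj
      have e3 : w S + w T = 0 := by rw [h]; exact CharTwo.add_self_eq_zero _
      have e4 : w (S ∆ T) + (w (S ∩ T) + w (S ∩ T)) = 0 := by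
        rw [← add_assoc, ← e2, e1, e3]
      rwa [CharTwo.add_self_eq_zero, add_zero] at e4
    have := hwzero _ hadd
    have : S ∆ T = (⊥ : Finset (Fin r)) := this
    exact symmDiff_eq_bot.mp this
  have hinv : ∀ S, (1 + w S) * (1 + w S) = 1 := by
    intro S
    have expand : (1 + w S) * (1 + w S) = 1 + (w S + w S) + w S * w S := by noncomm_ring
    rw [expand, hww, CharTwo.add_self_eq_zero, add_zero, add_zero]
  refine ⟨fun S => ⟨1 + w S, 1 + w S, hinv S, hinv S⟩, ?_, ?_⟩
  · intro S T h
    have h' : 1 + w S = 1 + w T := congrArg Units.val h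
    exact hwinj (add_left_cancel h')
  · intro S
    ext
    exact hinv S


/-- If `G` is a finite abelian 2-group of rank `n` realizable in characteristic 2, then every
element of `G` has order at most `4n`; consequently there is a uniform bound on the size of
such groups, so only finitely many of them exist up to isomorphism. -/
theorem fuchs_char_two_rank_bound (n : ℕ) (hn : 0 < n) :
    (∀ (G : Type) (_ : CommGroup G) (_ : Fintype G),
      (∃ c : Fin n → ℕ, (∀ i, 0 < c i) ∧
        Nonempty (G ≃* ((i : Fin n) → Multiplicative (ZMod (2 ^ c i))))) →
      (∃ (R : Type) (_ : Ring R), CharP R 2 ∧ Nonempty (Rˣ ≃* G)) →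
      ∀ x : G, orderOf x ≤ 4 * n) ∧
    (∃ N : ℕ, ∀ (G : Type) (_ : CommGroup G) (_ : Fintype G),
      (∃ c : Fin n → ℕ, (∀ i, 0 < c i) ∧
        Nonempty (G ≃* ((i : Fin n) → Multiplicative (ZMod (2 ^ c i))))) →
      (∃ (R : Type) (_ : Ring R), CharP R 2 ∧ Nonempty (Rˣ ≃* G)) →
      Fintype.card G ≤ N) := by
  classical
  have main : ∀ (G : Type) (_ : CommGroup G) (_ : Fintype G),
      (∃ c : Fin n → ℕ, (∀ i, 0 < c i) ∧
        Nonempty (G ≃* ((i : Fin n) → Multiplicative (ZMod (2 ^ c i))))) →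
      (∃ (R : Type) (_ : Ring R), CharP R 2 ∧ Nonempty (Rˣ ≃* G)) →
      ∀ x : G, orderOf x ≤ 4 * n := by
    intro G instG instF h1 h2 x
    letI := instG
    letI := instF
    obtain ⟨c, hc, ⟨e⟩⟩ := h1
    obtain ⟨R, instR, hchar, ⟨f⟩⟩ := h2
    letI := instR
    haveI := hchar
    have htors : Nat.card {g : G // g * g = 1} ≤ 2 ^ n := by
      have heq : Nat.card {g : G // g * g = 1}
          = Nat.card {g : (i : Fin n) → Multiplicative (ZMod (2 ^ c i)) // g * g = 1} := by
        apply Nat.card_congr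
        refine Equiv.subtypeEquiv e.toEquiv (fun g => ?_)
        show g * g = 1 ↔ e g * e g = 1
        rw [← map_mul]
        exact ⟨fun h => by rw [h, map_one], fun h => e.injective (by rw [h, map_one])⟩
      rw [heq]; exact two_torsion_pi_card n c hc
    have hcard : Nat.card G = 2 ^ (∑ i, c i) := by
      rw [Nat.card_congr e.toEquiv, Nat.card_pi]
      calc (∏ i, Nat.card (Multiplicative (ZMod (2 ^ c i)))) = ∏ i, 2 ^ c i := by
            apply Finset.prod_congr rfl
            intro i _
            rw [Nat.card_congr Multiplicative.toAdd, Nat.card_zmod]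
        _ = 2 ^ (∑ i, c i) := Finset.prod_pow_eq_pow_sum _ _ _
    have hdvd : orderOf x ∣ 2 ^ (∑ i, c i) := hcard ▸ orderOf_dvd_natCard x
    obtain ⟨k, hkle, hk⟩ := (Nat.dvd_prime_pow Nat.prime_two).mp hdvd
    by_cases hk2 : k < 2
    · have hle4 : (2:ℕ) ^ k ≤ 4 := by interval_cases k <;> norm_num
      omega
    · push_neg at hk2
      set u := f.symm x with hu_def
      have hu : orderOf u = 2 ^ k := by
        rw [← hk]; exact orderOf_injective f.symm.toMonoidHom f.symm.injective x
      have h1' : ((u : R)) ^ 2 ^ k = 1 := by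
        have hpow1 : u ^ 2 ^ k = 1 := by rw [← hu]; exact pow_orderOf_eq_one u
        rw [← Units.val_pow_eq_pow_val, hpow1, Units.val_one]
      have h2' : ((u : R)) ^ 2 ^ (k - 1) ≠ 1 := by
        intro h
        have hpow2 : u ^ 2 ^ (k - 1) = 1 :=
          Units.ext (by rw [Units.val_pow_eq_pow_val, h, Units.val_one])
        have hdv : 2 ^ k ∣ 2 ^ (k - 1) := hu ▸ orderOf_dvd_of_pow_eq_one hpow2
        have hle := Nat.le_of_dvd (by positivity) hdv
        have hlt := Nat.pow_lt_pow_right (show 1 < 2 by norm_num) (show k - 1 < k by omega)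
        omega
      obtain ⟨φ, hφinj, hφinv⟩ := char2_involutions R (u : R) k hk2 h1' h2'
      set ψ : Finset (Fin (2 ^ (k - 2))) → {g : G // g * g = 1} :=
        fun S => ⟨f (φ S), by rw [← map_mul, hφinv, map_one]⟩ with hψ_def
      have hψinj : Function.Injective ψ := by
        intro S T h
        apply hφinj
        apply f.injective
        exact congrArg Subtype.val h
      have hcount : 2 ^ 2 ^ (k - 2) ≤ Nat.card {g : G // g * g = 1} := by
        calc (2:ℕ) ^ 2 ^ (k - 2) = Nat.card (Finset (Fin (2 ^ (k - 2)))) := by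
              rw [Nat.card_eq_fintype_card, Fintype.card_finset, Fintype.card_fin]
          _ ≤ _ := Nat.card_le_card_of_injective ψ hψinj
      have hle : 2 ^ (k - 2) ≤ n :=
        (Nat.pow_le_pow_iff_right (show 1 < 2 by norm_num)).mp (le_trans hcount htors)
      have h4 : 4 * 2 ^ (k - 2) = (2:ℕ) ^ k := by
        rw [show (4:ℕ) = 2 ^ 2 by norm_num, ← pow_add]
        congr 1
        omega
      omega
  refine ⟨main, ⟨(4 * n) ^ n, ?_⟩⟩
  intro G instG instF h1 h2
  letI := instG
  letI := instF
  obtain ⟨c, hc, ⟨e⟩⟩ := h1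
  have hb : ∀ i, 2 ^ c i ≤ 4 * n := by
    intro i
    have hx := main G instG instF ⟨c, hc, ⟨e⟩⟩ h2
      (e.symm (Pi.mulSingle i (Multiplicative.ofAdd (1 : ZMod (2 ^ c i)))))
    have ho : orderOf (e.symm (Pi.mulSingle i (Multiplicative.ofAdd (1 : ZMod (2 ^ c i)))))
        = 2 ^ c i := by
      have hoi := orderOf_injective e.symm.toMonoidHom e.symm.injective
        (Pi.mulSingle i (Multiplicative.ofAdd (1 : ZMod (2 ^ c i))))
      simp only [MulEquiv.coe_toMonoidHom] at hoi
      rw [hoi, orderOf_piMulSingle, orderOf_ofAdd_eq_addOrderOf, ZMod.addOrderOf_one]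
    rw [← ho]
    exact hx
  rw [← Nat.card_eq_fintype_card, Nat.card_congr e.toEquiv, Nat.card_pi]
  calc (∏ i, Nat.card (Multiplicative (ZMod (2 ^ c i)))) ≤ ∏ _i : Fin n, (4 * n) := by
        apply Finset.prod_le_prod'
        intro i _
        rw [Nat.card_congr Multiplicative.toAdd, Nat.card_zmod]
        exact hb i
    _ = (4 * n) ^ n := by simp
end

section
/- For any finite abelian 2-groups A and B (either possibly trivial), the groups C_2 × A and C_4 × A × A × B × B_2 are each the group of units of some ring of characteristic 0, where B_2 = {x^2 : x ∈ B} is the subgroup of squares of B. -/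
/-!
For a commutative ring `S` of characteristic zero and an `S`-module `M`, the trivial square-zero
extension `S ⊕ M` has characteristic zero and unit group `Sˣ × (1 + M) ≅ Sˣ × M`. Taking `S = ℤ`,
with units `C₂`, and `M = A` gives the first group. For the second take `S = ℤ[i]`, with units
`C₄`: an abelian group is a `ℤ[i]`-module as soon as it carries an endomorphism `j` with
`j² = -1`, such as `(x, y) ↦ (-y, x)` on `A × A`, and `B × B₂` is the quotient of `B × B` by the
`j`-stable subgroup `{(y, y) | 2y = 0}`.
-/

open TrivSqZeroExt

namespace TrivSqZeroExt

variable {S M : Type*} [CommRing S] [AddCommGroup M] [Module S M] [Module Sᵐᵒᵖ M]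
  [IsCentralScalar S M]

/-- `m ↦ 1 + m` is multiplicative because `M` squares to zero. -/
def oneAddInr : Multiplicative M →* (TrivSqZeroExt S M)ˣ where
  toFun m := ⟨1 + inr m.toAdd, 1 - inr m.toAdd, by ext <;> simp, by ext <;> simp⟩
  map_one' := by ext <;> simp
  map_mul' m n := by ext <;> simp [add_comm]

variable (S M) in
noncomputable def unitsMulEquiv : Sˣ × Multiplicative M ≃* (TrivSqZeroExt S M)ˣ :=
  MulEquiv.ofBijective ((Units.map (inlHom S M).toMonoidHom).coprod oneAddInr) <| by
    refine ⟨(injective_iff_map_eq_one _).2 fun ⟨a, m⟩ h => ?_, fun u => ?_⟩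
    · have ha : a = 1 := by
        simpa [oneAddInr] using congrArg (fun u => fst u.val) h
      have hm : m = 1 := by
        simpa [oneAddInr, ha] using congrArg (fun u => snd u.val) h
      exact Prod.ext ha hm
    · let a : Sˣ := Units.map (fstHom S S M).toMonoidHom u
      refine ⟨(a, .ofAdd (((a⁻¹ : Sˣ) : S) • snd (u : TrivSqZeroExt S M))), ?_⟩
      ext
      · simp [oneAddInr, a]
      · simp [oneAddInr, a, smul_smul, ← fst_mul]

end TrivSqZeroExt

theorem exists_charZero_ring_units_mulEquiv (S G : Type) [CommRing S] [CharZero S] [CommGroup G]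
    [Module S (Additive G)] :
    ∃ (R : Type) (_ : Ring R), CharZero R ∧ Nonempty (Rˣ ≃* Sˣ × G) := by
  let : Module Sᵐᵒᵖ (Additive G) :=
    Module.compHom _ (RingEquiv.toOpposite S).symm.toRingHom
  have : IsCentralScalar S (Additive G) := ⟨fun _ _ => rfl⟩
  refine ⟨TrivSqZeroExt S (Additive G), inferInstance,
    charZero_of_injective_ringHom (f := inlHom S (Additive G)) inl_injective, ⟨?_⟩⟩
  exact (unitsMulEquiv S (Additive G)).symm.trans
    (MulEquiv.prodCongr (MulEquiv.refl _) (MulEquiv.multiplicativeAdditive G))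

open scoped IsMulCommutative in
def Zsqrtd.liftOfMulSelf {R : Type*} [Ring R] {d : ℤ} (r : R) (hr : r * r = d) : ℤ√d →+* R :=
  have : IsMulCommutative (Subring.closure {r}) := Subring.isMulCommutative_closure (by simp)
  (Subring.closure {r}).subtype.comp
    (Zsqrtd.lift ⟨⟨r, Subring.subset_closure rfl⟩, Subtype.ext (by simpa using hr)⟩)

namespace GaussianInt

def unitI : GaussianIntˣ := ⟨⟨0, 1⟩, ⟨0, -1⟩, by decide, by decide⟩

theorem exists_eq_unitI_pow_of_norm_eq_one {z : GaussianInt} (hz : z.norm = 1) :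
    ∃ k : ℕ, z = ↑(unitI ^ k) := by
  obtain ⟨a, b⟩ := z
  replace hz : a * a + b * b = 1 := by simpa [Zsqrtd.norm_def] using hz
  have ha₁ : -1 ≤ a := by nlinarith
  have ha₂ : a ≤ 1 := by nlinarith
  have hb₁ : -1 ≤ b := by nlinarith
  have hb₂ : b ≤ 1 := by nlinarith
  interval_cases a <;> interval_cases b <;> first
    | omega
    | exact ⟨0, by decide⟩
    | exact ⟨1, by decide⟩
    | exact ⟨2, by decide⟩
    | exact ⟨3, by decide⟩

theorem zpowers_unitI : Subgroup.zpowers unitI = ⊤ := by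
  refine Subgroup.eq_top_iff' _ |>.2 fun u => ?_
  obtain ⟨k, hk⟩ := exists_eq_unitI_pow_of_norm_eq_one
    ((Zsqrtd.norm_eq_one_iff' (by norm_num) u).2 u.isUnit)
  exact ⟨k, Units.ext (by simp [hk])⟩

theorem natCard_units : Nat.card GaussianIntˣ = 4 := by
  rw [← orderOf_eq_card_of_zpowers_eq_top zpowers_unitI]
  exact orderOf_eq_prime_pow (p := 2) (n := 1) (by decide) (by decide)

noncomputable def unitsMulEquiv : Multiplicative (ZMod 4) ≃* GaussianIntˣ :=
  zmodMulEquivOfGenerator (fun _ => zpowers_unitI ▸ Subgroup.mem_top _) natCard_units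

end GaussianInt

theorem exists_charZero_ring_units_mulEquiv_zmod_four_prod (G : Type) [CommGroup G] (j : G →* G)
    (hj : ∀ g, j (j g) = g⁻¹) :
    ∃ (R : Type) (_ : Ring R), CharZero R ∧ Nonempty (Rˣ ≃* Multiplicative (ZMod 4) × G) := by
  let : Module GaussianInt (Additive G) := Module.compHom _ <|
    Zsqrtd.liftOfMulSelf (R := AddMonoid.End (Additive G)) j.toAdditive
      (by ext g; push_cast; exact hj g.toMul)
  obtain ⟨R, _, hR, ⟨e⟩⟩ := exists_charZero_ring_units_mulEquiv GaussianInt G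
  exact ⟨R, _, hR, ⟨e.trans (GaussianInt.unitsMulEquiv.symm.prodCongr (.refl G))⟩⟩

section QuarterTurn

variable (A B : Type) [CommGroup A] [CommGroup B]

/-- On the factor `B × B₂ ≅ (B × B) / {(y, y) | y² = 1}`, identified via `(x, y) ↦ (x y⁻¹, y²)`,
this is the map induced by `(x, y) ↦ (y⁻¹, x)`. -/
def quarterTurn : A × A × B × (powMonoidHom 2 : B →* B).range →*
    A × A × B × (powMonoidHom 2 : B →* B).range where
  toFun g := (g.2.1⁻¹, g.1, g.2.2.1⁻¹ * (g.2.2.2 : B)⁻¹,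
    (powMonoidHom 2).rangeRestrict g.2.2.1 * g.2.2.2)
  map_one' := by ext <;> simp
  map_mul' g h := by ext <;> simp [mul_mul_mul_comm, mul_comm]

theorem quarterTurn_quarterTurn (g : A × A × B × (powMonoidHom 2 : B →* B).range) :
    quarterTurn A B (quarterTurn A B g) = g⁻¹ := by
  ext <;> apply Additive.ofMul.injective <;> simp [quarterTurn] <;> abel

end QuarterTurn

theorem fuchs_char_zero_realizable_general (A B : Type) [CommGroup A] [CommGroup B] :
    (∃ (R : Type) (_ : Ring R), CharZero R ∧
      Nonempty (Rˣ ≃* Multiplicative (ZMod 2) × A)) ∧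
    (∃ (R : Type) (_ : Ring R), CharZero R ∧
      Nonempty (Rˣ ≃* Multiplicative (ZMod 4) × A × A × B ×
        (powMonoidHom 2 : B →* B).range)) := by
  refine ⟨?_, exists_charZero_ring_units_mulEquiv_zmod_four_prod _ (quarterTurn A B)
    (quarterTurn_quarterTurn A B)⟩
  obtain ⟨R, _, hR, ⟨e⟩⟩ := exists_charZero_ring_units_mulEquiv ℤ A
  exact ⟨R, _, hR, ⟨e.trans ((mulEquivOfCyclicCardEq (by simp)).prodCongr (.refl A))⟩⟩

/-- For any finite abelian 2-groups `A` and `B`, the groups `C₂ × A` and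
`C₄ × A × A × B × B₂` (where `B₂` is the subgroup of squares of `B`) are each the group
of units of a ring of characteristic 0. -/
theorem fuchs_char_zero_realizable (A B : Type) [CommGroup A] [Fintype A]
    [CommGroup B] [Fintype B]
    (hA : ∃ e : ℕ, Fintype.card A = 2 ^ e) (hB : ∃ e : ℕ, Fintype.card B = 2 ^ e) :
    (∃ (R : Type) (_ : Ring R), CharZero R ∧
      Nonempty (Rˣ ≃* Multiplicative (ZMod 2) × A)) ∧
    (∃ (R : Type) (_ : Ring R), CharZero R ∧
      Nonempty (Rˣ ≃* Multiplicative (ZMod 4) × A × A × B ×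
        (powMonoidHom 2 : B →* B).range)) :=
  fuchs_char_zero_realizable_general A B
end

section
/- If a finite group G is the group of units of some ring of characteristic n > 0, then there exists a finite ring R of characteristic n whose group of units is isomorphic to G. If moreover G is abelian, then R may be taken to be a finite commutative ring of characteristic n. -/
/-!
Replace `S` by the `ZMod n`-subalgebra generated by its units: it contains every unit of `S`
together with its inverse, so it has the same unit group, and it has the same characteristic.
Since the units form a submonoid, this subalgebra is their `ZMod n`-linear span, hence finite;
and it is commutative as soon as the units commute with each other.
-/

def Submonoid.unitsMulEquivOfForallUnitMem {M : Type*} [Monoid M] (T : Submonoid M)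
    (h : ∀ u : Mˣ, (u : M) ∈ T) : Tˣ ≃* Mˣ :=
  T.unitsEquivUnitsType.symm.trans <|
    (MulEquiv.subgroupCongr (eq_top_iff.mpr fun u _ => ⟨h u, h u⁻¹⟩)).trans Subgroup.topEquiv

namespace Algebra

variable (R : Type*) {S : Type*} [CommRing R] [Ring S] [Algebra R S]

theorem finite_adjoin_submonoid [Finite R] (M : Submonoid S) [Finite M] :
    Finite (adjoin R (M : Set S)) := by
  have : Module.Finite R (Submodule.span R (M : Set S)) := .span_of_finite R (Set.toFinite _)
  have : Finite (Submodule.span R (M : Set S)) := Module.finite_of_finite R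
  rwa [← Submonoid.closure_eq M, ← adjoin_eq_span] at this

theorem units_mem_adjoin_units (u : Sˣ) : (u : S) ∈ adjoin R (IsUnit.submonoid S : Set S) :=
  subset_adjoin u.isUnit

def unitsMulEquivAdjoinUnits : (adjoin R (IsUnit.submonoid S : Set S))ˣ ≃* Sˣ :=
  Submonoid.unitsMulEquivOfForallUnitMem _ (units_mem_adjoin_units R)

theorem isMulCommutative_adjoin_units (hS : ∀ u v : Sˣ, u * v = v * u) :
    IsMulCommutative (adjoin R (IsUnit.submonoid S : Set S)) :=
  isMulCommutative_adjoin R <| by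
    rintro _ ⟨u, rfl⟩ _ ⟨v, rfl⟩
    exact congrArg Units.val (hS u v)

end Algebra

/-- If a finite group `G` is the group of units of a ring of characteristic `n > 0`, then it
is the group of units of a finite ring of characteristic `n`; if moreover `G` is abelian, the
finite ring may be taken commutative. -/
theorem fuchs_wlog_finite (n : ℕ) (hn : 0 < n) (G : Type) [Group G] [Finite G]
    (h : ∃ (S : Type) (_ : Ring S), CharP S n ∧ Nonempty (Sˣ ≃* G)) :
    (∃ (R : Type) (_ : Ring R) (_ : Fintype R), CharP R n ∧ Nonempty (Rˣ ≃* G)) ∧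
    ((∀ a b : G, a * b = b * a) →
      ∃ (R : Type) (_ : CommRing R) (_ : Fintype R), CharP R n ∧ Nonempty (Rˣ ≃* G)) := by
  obtain ⟨S, _, _, ⟨e⟩⟩ := h
  have : NeZero n := ⟨hn.ne'⟩
  have : Finite (IsUnit.submonoid S) :=
    .of_equiv G (e.symm.trans Submonoid.unitsTypeEquivIsUnitSubmonoid).toEquiv
  let := ZMod.algebra S n
  let A := Algebra.adjoin (ZMod n) (IsUnit.submonoid S : Set S)
  have : Finite A := Algebra.finite_adjoin_submonoid (ZMod n) _
  have : CharP A n := A.val.toRingHom.charP Subtype.val_injective n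
  let eA : Aˣ ≃* G := (Algebra.unitsMulEquivAdjoinUnits (ZMod n)).trans e
  refine ⟨⟨A, inferInstance, .ofFinite A, inferInstance, ⟨eA⟩⟩, fun hG => ?_⟩
  have : IsMulCommutative A :=
    Algebra.isMulCommutative_adjoin_units (ZMod n) fun u v => e.injective (by simp [hG])
  open scoped IsMulCommutative in
  exact ⟨A, inferInstance, .ofFinite A, inferInstance, ⟨eA⟩⟩
end

section
/- If a group G is the group of units of some ring of characteristic n, then every maximal abelian subgroup of G is also the group of units of some ring of characteristic n. -/
/-- If `G` is the group of units of a ring of characteristic `n`, then so is every maximal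
abelian subgroup of `G`. -/
theorem fuchs_maximal_abelian (n : ℕ) (G : Type) [Group G]
    (h : ∃ (R : Type) (_ : Ring R), CharP R n ∧ Nonempty (Rˣ ≃* G))
    (H : Subgroup G) (habelian : ∀ a b : G, a ∈ H → b ∈ H → a * b = b * a)
    (hmax : ∀ K : Subgroup G, (∀ a b : G, a ∈ K → b ∈ K → a * b = b * a) → H ≤ K → K = H) :
    ∃ (R : Type) (_ : Ring R), CharP R n ∧ Nonempty (Rˣ ≃* H) := by
  obtain ⟨R, _, hchar, ⟨e⟩⟩ := h
  -- Any element commuting with all of H is in H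
  have hcent : ∀ u : G, (∀ g ∈ H, g * u = u * g) → u ∈ H := by
    intro u hu
    set K : Subgroup G := Subgroup.closure ((H : Set G) ∪ {u}) with hK
    have hcomm : ∀ x ∈ ((H : Set G) ∪ {u}), ∀ y ∈ ((H : Set G) ∪ {u}), Commute x y := by
      rintro x (hx | rfl) y (hy | rfl)
      · exact habelian x y hx hy
      · exact hu x hx
      · exact (hu y hy).symm
      · rfl
    have habK : ∀ a b : G, a ∈ K → b ∈ K → a * b = b * a := by
      intro a b ha hb
      refine Subgroup.closure_induction₂ (p := fun x y _ _ => Commute x y)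
        (fun x y hx hy => hcomm x hx y hy)
        (fun x _ => Commute.one_left x) (fun x _ => Commute.one_right x)
        (fun x y z _ _ _ h1 h2 => h1.mul_left h2)
        (fun y z x _ _ _ h1 h2 => h1.mul_right h2)
        (fun x y _ _ h1 => h1.inv_left) (fun x y _ _ h1 => h1.inv_right) ha hb
    have hHK : H ≤ K := fun x hx => Subgroup.subset_closure (Or.inl hx)
    have := hmax K habK hHK
    rw [← this]
    exact Subgroup.subset_closure (Or.inr rfl)
  -- the set of elements of R coming from units mapping into H
  set s : Set R := (fun u : Rˣ => (u : R)) '' {u : Rˣ | e u ∈ H} with hs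
  set S : Subring R := Subring.centralizer s with hS
  have hcharS : CharP S n := by
    refine ⟨fun x => ?_⟩
    rw [← CharP.cast_eq_zero_iff R n x, ← map_natCast S.subtype x,
      map_eq_zero_iff S.subtype Subtype.coe_injective]
  -- the monoid hom Sˣ →* Rˣ
  set j : Sˣ →* Rˣ := Units.map (S.subtype : S →* R) with hj
  have hjcoe : ∀ u : Sˣ, ((j u : Rˣ) : R) = ((u : S) : R) := fun u => rfl
  have hmem : ∀ u : Sˣ, e (j u) ∈ H := by
    intro u
    apply hcent
    intro g hg
    set v : Rˣ := e.symm g with hv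
    have hvs : (v : R) ∈ s := ⟨v, by simp [hv, hg], rfl⟩
    have h1 : (v : R) * ((u : S) : R) = ((u : S) : R) * (v : R) :=
      (u : S).2 _ hvs
    have h2 : v * j u = j u * v := by
      ext
      simpa [hjcoe] using h1
    have := congrArg e h2
    rw [map_mul, map_mul] at this
    simp only [hv, MulEquiv.apply_symm_apply] at this
    exact this
  set φ : Sˣ →* H :=
    MonoidHom.codRestrict (e.toMonoidHom.comp j) H hmem with hφ
  have hinj : Function.Injective φ := by
    intro a b hab
    have : e (j a) = e (j b) := congrArg Subtype.val hab
    have hj' : j a = j b := e.injective this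
    exact Units.map_injective Subtype.coe_injective hj'
  have hsurj : Function.Surjective φ := by
    rintro ⟨g, hg⟩
    set v : Rˣ := e.symm g with hv
    have key : ∀ w : Rˣ, e w ∈ H → w * v = v * w := by
      intro w hw
      apply e.injective
      rw [map_mul, map_mul]
      simp only [hv, MulEquiv.apply_symm_apply]
      exact habelian _ _ hw hg
    have hvS : (v : R) ∈ S := by
      rw [hS, Subring.mem_centralizer_iff]
      rintro _ ⟨w, hw, rfl⟩
      simpa using congrArg (Units.val) (key w hw)
    have hviS : ((v⁻¹ : Rˣ) : R) ∈ S := by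
      rw [hS, Subring.mem_centralizer_iff]
      rintro _ ⟨w, hw, rfl⟩
      have : w * v⁻¹ = v⁻¹ * w := by
        have h1 := key w hw
        calc w * v⁻¹ = v⁻¹ * (v * w) * v⁻¹ := by group
        _ = v⁻¹ * (w * v) * v⁻¹ := by rw [h1]
        _ = v⁻¹ * w := by group
      simpa using congrArg (Units.val) this
    refine ⟨⟨⟨(v : R), hvS⟩, ⟨((v⁻¹ : Rˣ) : R), hviS⟩, ?_, ?_⟩, ?_⟩
    · ext; simp
    · ext; simp
    · ext
      show e (j _) = g
      have : j ⟨⟨(v : R), hvS⟩, ⟨((v⁻¹ : Rˣ) : R), hviS⟩, by ext; simp, by ext; simp⟩ = v := by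
        ext; rfl
      rw [this, hv, MulEquiv.apply_symm_apply]
  exact ⟨S, inferInstance, hcharS, ⟨MulEquiv.ofBijective φ ⟨hinj, hsurj⟩⟩⟩
end

section
/- If a group G is the group of units of some ring of characteristic n, then the center Z(G) of G is also the group of units of some ring of characteristic n. -/
/-- If `G` is the group of units of a ring of characteristic `n`, then so is its center. -/
theorem fuchs_center (n : ℕ) (G : Type) [Group G]
    (h : ∃ (R : Type) (_ : Ring R), CharP R n ∧ Nonempty (Rˣ ≃* G)) :
    ∃ (R : Type) (_ : Ring R), CharP R n ∧ Nonempty (Rˣ ≃* Subgroup.center G) := by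
  obtain ⟨R, _, hchar, ⟨e⟩⟩ := h
  set S : Subring R := Subring.centralizer (Set.range (Units.val : Rˣ → R)) with hS
  refine ⟨S, inferInstance, CharP.subring R n S, ⟨?_⟩⟩
  -- units of S map to units of R
  have hφcoe : ∀ u : Sˣ, ((u : S) : R) ∈ S := fun u => (u : S).2
  -- forward map
  have key : ∀ (u : Sˣ) (v : Rˣ), (v : R) * ((u : S) : R) = ((u : S) : R) * v := by
    intro u v
    exact (u : S).2 (v : R) ⟨v, rfl⟩
  have keyinv : ∀ (u : Sˣ) (v : Rˣ), (v : R) * ((↑u⁻¹ : S) : R) = ((↑u⁻¹ : S) : R) * v := by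
    intro u v
    exact ((↑u⁻¹ : S) : S).2 (v : R) ⟨v, rfl⟩
  let φ : Sˣ → Rˣ := fun u =>
    ⟨((u : S) : R), ((↑u⁻¹ : S) : R),
      by norm_cast; simp,
      by norm_cast; simp⟩
  have hφ_central : ∀ u : Sˣ, φ u ∈ Subgroup.center Rˣ := by
    intro u
    rw [Subgroup.mem_center_iff]
    intro v
    ext
    exact key u v
  -- centrality transfers through e
  have hcent : ∀ u : Sˣ, e (φ u) ∈ Subgroup.center G := by
    intro u
    rw [Subgroup.mem_center_iff]
    intro g
    have := (Subgroup.mem_center_iff.mp (hφ_central u)) (e.symm g)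
    calc g * e (φ u) = e (e.symm g) * e (φ u) := by rw [e.apply_symm_apply]
      _ = e (e.symm g * φ u) := by rw [map_mul]
      _ = e (φ u * e.symm g) := by rw [this]
      _ = e (φ u) * e (e.symm g) := by rw [map_mul]
      _ = e (φ u) * g := by rw [e.apply_symm_apply]
  -- inverse map
  have hmemS : ∀ g : Subgroup.center G, ((e.symm (g : G) : Rˣ) : R) ∈ S := by
    intro g
    intro x hx
    obtain ⟨w, rfl⟩ := hx
    have hg := Subgroup.mem_center_iff.mp g.2 (e w)
    have : w * e.symm (g : G) = e.symm (g : G) * w := by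
      apply e.injective
      simpa [map_mul] using hg
    exact congrArg Units.val this
  have hmemSinv : ∀ g : Subgroup.center G, (((e.symm (g : G))⁻¹ : Rˣ) : R) ∈ S := by
    intro g
    intro x hx
    obtain ⟨w, rfl⟩ := hx
    have hg := Subgroup.mem_center_iff.mp g.2 (e w⁻¹)
    have : w⁻¹ * e.symm (g : G) = e.symm (g : G) * w⁻¹ := by
      apply e.injective
      simpa [map_mul] using hg
    have h2 : w * (e.symm (g : G))⁻¹ = (e.symm (g : G))⁻¹ * w := by
      have := congrArg (fun x => x⁻¹) this
      simpa [mul_comm, mul_inv_rev] using this.symm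
    exact congrArg Units.val h2
  let ψ : Subgroup.center G → Sˣ := fun g =>
    ⟨⟨((e.symm (g : G) : Rˣ) : R), hmemS g⟩,
     ⟨(((e.symm (g : G))⁻¹ : Rˣ) : R), hmemSinv g⟩,
     by ext; push_cast; exact (e.symm (g : G)).mul_inv,
     by ext; push_cast; exact (e.symm (g : G)).inv_mul⟩
  refine ⟨⟨fun u => ⟨e (φ u), hcent u⟩, ψ, ?_, ?_⟩, ?_⟩
  · intro u
    have h1 : e.symm (e (φ u)) = φ u := e.symm_apply_apply _
    ext
    show ((e.symm (e (φ u)) : Rˣ) : R) = ((u : S) : R)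
    rw [h1]
  · intro g
    have : φ (ψ g) = e.symm (g : G) := by ext; rfl
    ext
    show e (φ (ψ g)) = (g : G)
    rw [this, e.apply_symm_apply]
  · intro u v
    ext
    show e (φ (u * v)) = e (φ u) * e (φ v)
    rw [← map_mul]
    rfl
end

section
/- If H is a finite abelian 2-group in which every element has order at most 2^r, then for no ring of characteristic 2 is the group of units isomorphic to C_{2^{r+3}} × H. -/
open Polynomial

private lemma aux_self_mul_nilpotent {R : Type} [Ring R] {a t : R} (h : a = a * t)
    {n : ℕ} (ht : t ^ n = 0) : a = 0 := by
  have key : ∀ m : ℕ, a = a * t ^ m := by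
    intro m
    induction m with
    | zero => rw [pow_zero, mul_one]
    | succ m ih =>
      calc a = a * t := h
      _ = (a * t ^ m) * t := by rw [← ih]
      _ = a * t ^ (m + 1) := by rw [mul_assoc, ← pow_succ]
  rw [key n, ht, mul_zero]

private lemma zmod2_pow_pow (m : ℕ) (c : ZMod 2) : c ^ (2 ^ m) = c := by
  have hsq : ∀ d : ZMod 2, d ^ 2 = d := by decide
  induction m with
  | zero => rw [pow_zero, pow_one]
  | succ k ih => rw [pow_succ, pow_mul, ih, hsq]

private lemma poly_core {R : Type} [Ring R] (ψ : (ZMod 2)[X] →+* R)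
    (h8 : ψ (X ^ 8) = 0) (h4 : ψ (X ^ 4) ≠ 0)
    (d1 d2 d3 d4 : ZMod 2)
    (h : ψ (C d1 * X + C d2 * X ^ 2 + C d3 * X ^ 3 + C d4 * X ^ 4) = 0) :
    d1 = 0 ∧ d2 = 0 ∧ d3 = 0 ∧ d4 = 0 := by
  have two01 : ∀ c : ZMod 2, c = 0 ∨ c = 1 := by decide
  have helper : ∀ k : ℕ, 1 ≤ k → k ≤ 4 → ∀ s : (ZMod 2)[X],
      ψ (X ^ k * (1 + X * s)) = 0 → False := by
    intro k hk1 hk4 s hs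
    have expand : ψ (X ^ k) + ψ (X ^ k) * ψ (X * s) = 0 := by
      rw [← map_mul, ← map_add]
      rw [show (X ^ k + X ^ k * (X * s) : (ZMod 2)[X]) = X ^ k * (1 + X * s) by ring]
      exact hs
    have h' : ψ (X ^ k) = ψ (X ^ k) * (-ψ (X * s)) := by
      rw [mul_neg]
      exact eq_neg_of_add_eq_zero_left expand
    have ht : (-ψ (X * s)) ^ 8 = 0 := by
      rw [neg_pow, ← map_pow,
        show ((X * s : (ZMod 2)[X]) ^ 8) = X ^ 8 * s ^ 8 by ring,
        map_mul, h8, zero_mul, mul_zero]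
    have hzero : ψ (X ^ k) = 0 := aux_self_mul_nilpotent h' ht
    apply h4
    rw [show (X ^ 4 : (ZMod 2)[X]) = X ^ k * X ^ (4 - k) by
        rw [← pow_add]; congr 1; omega,
      map_mul, hzero, zero_mul]
  have hd1 : d1 = 0 := by
    rcases two01 d1 with h1 | h1
    · exact h1
    · exfalso
      rw [h1] at h
      refine helper 1 le_rfl (by norm_num) (C d2 + C d3 * X + C d4 * X ^ 2) ?_
      rw [show (X ^ 1 * (1 + X * (C d2 + C d3 * X + C d4 * X ^ 2)) : (ZMod 2)[X])
          = C (1 : ZMod 2) * X + C d2 * X ^ 2 + C d3 * X ^ 3 + C d4 * X ^ 4 by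
        rw [map_one]; ring]
      exact h
  rw [hd1, map_zero, zero_mul, zero_add] at h
  have hd2 : d2 = 0 := by
    rcases two01 d2 with h1 | h1
    · exact h1
    · exfalso
      rw [h1] at h
      refine helper 2 (by norm_num) (by norm_num) (C d3 + C d4 * X) ?_
      rw [show (X ^ 2 * (1 + X * (C d3 + C d4 * X)) : (ZMod 2)[X])
          = C (1 : ZMod 2) * X ^ 2 + C d3 * X ^ 3 + C d4 * X ^ 4 by
        rw [map_one]; ring]
      exact h
  rw [hd2, map_zero, zero_mul, zero_add] at h
  have hd3 : d3 = 0 := by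
    rcases two01 d3 with h1 | h1
    · exact h1
    · exfalso
      rw [h1] at h
      refine helper 3 (by norm_num) (by norm_num) (C d4) ?_
      rw [show (X ^ 3 * (1 + X * C d4) : (ZMod 2)[X])
          = C (1 : ZMod 2) * X ^ 3 + C d4 * X ^ 4 by
        rw [map_one]; ring]
      exact h
  rw [hd3, map_zero, zero_mul, zero_add] at h
  have hd4 : d4 = 0 := by
    rcases two01 d4 with h1 | h1
    · exact h1
    · exfalso
      rw [h1] at h
      refine helper 4 (by norm_num) (by norm_num) 0 ?_
      rw [show (X ^ 4 * (1 + X * 0) : (ZMod 2)[X]) = C (1 : ZMod 2) * X ^ 4 by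
        rw [map_one]; ring]
      exact h
  exact ⟨hd1, hd2, hd3, hd4⟩

/-- If `H` is a finite abelian 2-group in which every element has order at most `2^r`, then
`C_{2^{r+3}} × H` is not the group of units of a ring of characteristic 2. -/
theorem fuchs_rank_difference (r : ℕ) (H : Type) [CommGroup H] [Fintype H]
    (hH : ∃ e : ℕ, Fintype.card H = 2 ^ e)
    (horder : ∀ x : H, orderOf x ≤ 2 ^ r) :
    ¬ ∃ (R : Type) (_ : Ring R), CharP R 2 ∧
      Nonempty (Rˣ ≃* Multiplicative (ZMod (2 ^ (r + 3))) × H) := by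
  rintro ⟨R, hR, hchar, ⟨e⟩⟩
  haveI : Fact (Nat.Prime 2) := ⟨Nat.prime_two⟩
  haveI : NeZero (2 ^ (r + 3)) := ⟨by positivity⟩
  haveI := ZMod.algebra R 2
  -- every element of H has 2^r-th power one
  obtain ⟨ce, hce⟩ := hH
  have hH2 : ∀ h : H, h ^ (2 ^ r) = 1 := by
    intro h
    have hdvd : orderOf h ∣ 2 ^ ce := hce ▸ orderOf_dvd_card
    obtain ⟨j, hj, hjo⟩ := (Nat.dvd_prime_pow Nat.prime_two).mp hdvd
    have hle : j ≤ r := by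
      have := horder h
      rw [hjo] at this
      exact (Nat.pow_le_pow_iff_right one_lt_two).mp this
    exact orderOf_dvd_iff_pow_eq_one.mp (hjo ▸ pow_dvd_pow 2 hle)
  -- the distinguished unit
  set g0 : Multiplicative (ZMod (2 ^ (r + 3))) × H :=
    (Multiplicative.ofAdd (1 : ZMod (2 ^ (r + 3))), 1) with hg0def
  set u : Rˣ := e.symm g0 with hudef
  have hg0pow : ∀ k : ℕ, g0 ^ k = 1 ↔ (2 ^ (r + 3) : ℕ) ∣ k := by
    intro k
    have h1 : g0 ^ k = (Multiplicative.ofAdd ((k : ZMod (2 ^ (r + 3)))), 1) := by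
      rw [hg0def, Prod.pow_mk]
      congr 1
      · rw [← ofAdd_nsmul]
        congr 1
        rw [nsmul_eq_mul, mul_one]
      · exact one_pow k
    rw [h1]
    constructor
    · intro hk
      have : (k : ZMod (2 ^ (r + 3))) = 0 := by
        have := congrArg (fun x => (Multiplicative.toAdd x.1)) hk
        simpa using this
      exact (ZMod.natCast_eq_zero_iff k _).mp this
    · intro hk
      have : (k : ZMod (2 ^ (r + 3))) = 0 := (ZMod.natCast_eq_zero_iff k _).mpr hk
      rw [this]
      rfl
  have hupow : ∀ k : ℕ, u ^ k = 1 ↔ (2 ^ (r + 3) : ℕ) ∣ k := by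
    intro k
    rw [hudef, ← map_pow, ← hg0pow k]
    constructor
    · intro hk
      have := congrArg e hk
      simpa using this
    · intro hk
      rw [hk, map_one]
  have huR : ∀ k : ℕ, ((u : R) ^ k = 1 ↔ (2 ^ (r + 3) : ℕ) ∣ k) := by
    intro k
    rw [← hupow k]
    constructor
    · intro hk
      ext
      rw [Units.val_pow_eq_pow_val, hk, Units.val_one]
    · intro hk
      rw [← Units.val_pow_eq_pow_val, hk, Units.val_one]
  set w : R := (u : R) + 1 with hwdef
  have h2R : (1 : R) + 1 = 0 := by
    have := CharP.cast_eq_zero R 2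
    rwa [Nat.cast_ofNat, ← one_add_one_eq_two] at this
  have hwN : w ^ (2 ^ (r + 3)) = 0 := by
    rw [hwdef, add_pow_char_pow_of_commute (p := 2) (n := r + 3) (Commute.one_right (u : R)),
      one_pow, (huR _).mpr dvd_rfl, h2R]
  have hw4 : w ^ (2 ^ (r + 2)) ≠ 0 := by
    intro h0
    have hu' : (u : R) = w + 1 := by
      rw [hwdef, add_assoc, h2R, add_zero]
    have : (u : R) ^ (2 ^ (r + 2)) = 1 := by
      rw [hu', add_pow_char_pow_of_commute (p := 2) (n := r + 2) (Commute.one_right w),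
        one_pow, h0, zero_add]
    have hdvd := (huR _).mp this
    have := Nat.le_of_dvd (by positivity) hdvd
    have h23 : (2:ℕ) ^ (r + 2) < 2 ^ (r + 3) := Nat.pow_lt_pow_right one_lt_two (by omega)
    omega
  -- polynomial evaluation maps
  set φ : (ZMod 2)[X] →ₐ[ZMod 2] R := Polynomial.aeval w with hφdef
  set ψ : (ZMod 2)[X] →ₐ[ZMod 2] R := Polynomial.aeval (w ^ (2 ^ r)) with hψdef
  have hψ8 : ψ (X ^ 8) = 0 := by
    rw [hψdef, map_pow, Polynomial.aeval_X, ← pow_mul,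
      show 2 ^ r * 8 = 2 ^ (r + 3) by ring, hwN]
  have hψ4 : ψ (X ^ 4) ≠ 0 := by
    rw [hψdef, map_pow, Polynomial.aeval_X, ← pow_mul,
      show 2 ^ r * 4 = 2 ^ (r + 2) by ring]
    exact hw4
  -- the 16 units
  set p : ZMod 2 → ZMod 2 → ZMod 2 → ZMod 2 → (ZMod 2)[X] := fun c1 c2 c3 c4 =>
    1 + C c1 * X + C c2 * X ^ 2 + C c3 * X ^ 3 + C c4 * X ^ 4 with hpdef
  have hunit : ∀ c1 c2 c3 c4, IsUnit (φ (p c1 c2 c3 c4)) := by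
    intro c1 c2 c3 c4
    have hsplit : p c1 c2 c3 c4 = 1 + X * (C c1 + C c2 * X + C c3 * X ^ 2 + C c4 * X ^ 3) := by
      rw [hpdef]; ring
    rw [hsplit, map_add, map_one]
    refine IsNilpotent.isUnit_one_add ⟨2 ^ (r + 3), ?_⟩
    rw [← map_pow,
      show ((X * (C c1 + C c2 * X + C c3 * X ^ 2 + C c4 * X ^ 3) : (ZMod 2)[X]) ^ (2 ^ (r + 3)))
        = X ^ (2 ^ (r + 3)) * (C c1 + C c2 * X + C c3 * X ^ 2 + C c4 * X ^ 3) ^ (2 ^ (r + 3))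
        by rw [mul_pow],
      map_mul, map_pow, hφdef, Polynomial.aeval_X, hwN, zero_mul]
  set V : ZMod 2 → ZMod 2 → ZMod 2 → ZMod 2 → Rˣ := fun c1 c2 c3 c4 =>
    (hunit c1 c2 c3 c4).unit with hVdef
  -- Frobenius computation
  have hterm : ∀ (c : ZMod 2) (i : ℕ), (C c * X ^ i) ^ (2 ^ r) = C c * X ^ (2 ^ r * i) := by
    intro c i
    rw [mul_pow, ← map_pow, zmod2_pow_pow, ← pow_mul, Nat.mul_comm]
  have hfrob : ∀ c1 c2 c3 c4, (p c1 c2 c3 c4) ^ (2 ^ r) =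
      1 + C c1 * X ^ (2 ^ r * 1) + C c2 * X ^ (2 ^ r * 2)
        + C c3 * X ^ (2 ^ r * 3) + C c4 * X ^ (2 ^ r * 4) := by
    intro c1 c2 c3 c4
    rw [show p c1 c2 c3 c4
        = 1 + C c1 * X ^ 1 + C c2 * X ^ 2 + C c3 * X ^ 3 + C c4 * X ^ 4 by rw [hpdef]; ring]
    rw [add_pow_char_pow _ _ 2 r, add_pow_char_pow _ _ 2 r, add_pow_char_pow _ _ 2 r,
      add_pow_char_pow _ _ 2 r, one_pow, hterm, hterm, hterm, hterm]
  have hVpow : ∀ c1 c2 c3 c4, ((V c1 c2 c3 c4 ^ (2 ^ r) : Rˣ) : R) = ψ (p c1 c2 c3 c4) := by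
    intro c1 c2 c3 c4
    rw [Units.val_pow_eq_pow_val, hVdef]
    simp only [IsUnit.unit_spec]
    rw [← map_pow, hfrob]
    rw [hpdef]
    simp [map_add, map_mul, map_pow, map_one, Polynomial.aeval_X, Polynomial.aeval_C,
      hφdef, hψdef, pow_mul]
  -- injectivity
  have hinj : ∀ c1 c2 c3 c4 c1' c2' c3' c4',
      V c1 c2 c3 c4 ^ (2 ^ r) = V c1' c2' c3' c4' ^ (2 ^ r) →
      c1 = c1' ∧ c2 = c2' ∧ c3 = c3' ∧ c4 = c4' := by
    intro c1 c2 c3 c4 c1' c2' c3' c4' hV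
    have hval : ψ (p c1 c2 c3 c4) = ψ (p c1' c2' c3' c4') := by
      rw [← hVpow, ← hVpow, hV]
    have hdiff : ψ (C (c1 - c1') * X + C (c2 - c2') * X ^ 2
        + C (c3 - c3') * X ^ 3 + C (c4 - c4') * X ^ 4) = 0 := by
      rw [show (C (c1 - c1') * X + C (c2 - c2') * X ^ 2
          + C (c3 - c3') * X ^ 3 + C (c4 - c4') * X ^ 4 : (ZMod 2)[X])
          = p c1 c2 c3 c4 - p c1' c2' c3' c4' by
        rw [hpdef]; simp only [map_sub]; ring]
      rw [map_sub, hval, sub_self]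
    obtain ⟨e1, e2, e3, e4⟩ := poly_core ψ.toRingHom hψ8 hψ4 _ _ _ _ hdiff
    exact ⟨sub_eq_zero.mp e1, sub_eq_zero.mp e2, sub_eq_zero.mp e3, sub_eq_zero.mp e4⟩
  -- the counting map
  set N := 2 ^ (r + 3) with hNdef
  set Φ : ZMod 2 × ZMod 2 × ZMod 2 × ZMod 2 → ZMod N := fun c =>
    Multiplicative.toAdd ((e (V c.1 c.2.1 c.2.2.1 c.2.2.2 ^ (2 ^ r))).1) with hΦdef
  have hsnd : ∀ c1 c2 c3 c4, (e (V c1 c2 c3 c4 ^ (2 ^ r))).2 = 1 := by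
    intro c1 c2 c3 c4
    rw [map_pow]
    have : (e (V c1 c2 c3 c4) ^ 2 ^ r).2 = (e (V c1 c2 c3 c4)).2 ^ 2 ^ r := rfl
    rw [this, hH2]
  have hΦinj : Function.Injective Φ := by
    intro c c' hcc
    have hfst : (e (V c.1 c.2.1 c.2.2.1 c.2.2.2 ^ (2 ^ r))).1
        = (e (V c'.1 c'.2.1 c'.2.2.1 c'.2.2.2 ^ (2 ^ r))).1 := by
      simp only [hΦdef] at hcc
      exact Multiplicative.toAdd.injective hcc
    have heq : e (V c.1 c.2.1 c.2.2.1 c.2.2.2 ^ (2 ^ r))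
        = e (V c'.1 c'.2.1 c'.2.2.1 c'.2.2.2 ^ (2 ^ r)) := by
      ext1
      · exact hfst
      · rw [hsnd, hsnd]
    have hVeq := e.injective heq
    obtain ⟨e1, e2, e3, e4⟩ := hinj _ _ _ _ _ _ _ _ hVeq
    exact Prod.ext e1 (Prod.ext e2 (Prod.ext e3 e4))
  have hΦrange : ∀ c, ∃ b : Fin 8, Φ c = ((2 ^ r : ℕ) : ZMod N) * ((b : ℕ) : ZMod N) := by
    intro c
    set a : ZMod N := Multiplicative.toAdd ((e (V c.1 c.2.1 c.2.2.1 c.2.2.2)).1) with hadef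
    have hΦc : Φ c = ((2 ^ r : ℕ) : ZMod N) * a := by
      simp only [hΦdef]
      rw [map_pow]
      have h1 : (e (V c.1 c.2.1 c.2.2.1 c.2.2.2) ^ 2 ^ r).1
          = (e (V c.1 c.2.1 c.2.2.1 c.2.2.2)).1 ^ 2 ^ r := rfl
      rw [h1, toAdd_pow, ← hadef, nsmul_eq_mul]
    refine ⟨⟨a.val % 8, Nat.mod_lt _ (by norm_num)⟩, ?_⟩
    rw [hΦc]
    calc ((2 ^ r : ℕ) : ZMod N) * a
        = ((2 ^ r * a.val : ℕ) : ZMod N) := by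
          rw [Nat.cast_mul, ZMod.natCast_zmod_val]
      _ = ((2 ^ r * (8 * (a.val / 8) + a.val % 8) : ℕ) : ZMod N) := by
          rw [Nat.div_add_mod]
      _ = ((2 ^ (r + 3) * (a.val / 8) + 2 ^ r * (a.val % 8) : ℕ) : ZMod N) := by
          rw [show 2 ^ r * (8 * (a.val / 8) + a.val % 8)
              = 2 ^ (r + 3) * (a.val / 8) + 2 ^ r * (a.val % 8) from by ring]
      _ = ((2 ^ r : ℕ) : ZMod N) * ((a.val % 8 : ℕ) : ZMod N) := by
          rw [Nat.cast_add, Nat.cast_mul, Nat.cast_mul, ← hNdef, ZMod.natCast_self,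
            zero_mul, zero_add]
  -- pigeonhole
  have hcard16 : (Finset.univ.image Φ).card = 16 := by
    rw [Finset.card_image_of_injective _ hΦinj, Finset.card_univ]
    simp [Fintype.card_prod]
  have hsub : Finset.univ.image Φ ⊆
      Finset.univ.image (fun b : Fin 8 => ((2 ^ r : ℕ) : ZMod N) * ((b : ℕ) : ZMod N)) := by
    intro x hx
    simp only [Finset.mem_image, Finset.mem_univ, true_and] at hx ⊢
    obtain ⟨c, rfl⟩ := hx
    obtain ⟨b, hb⟩ := hΦrange c
    exact ⟨b, hb.symm⟩
  have hle := Finset.card_le_card hsub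
  have hle8 : (Finset.univ.image
      (fun b : Fin 8 => ((2 ^ r : ℕ) : ZMod N) * ((b : ℕ) : ZMod N))).card ≤ 8 := by
    calc _ ≤ (Finset.univ : Finset (Fin 8)).card := Finset.card_image_le
      _ = 8 := by simp
  omega
end

section
/- Neither C_8 × C_4 nor C_8 × C_8 is the group of units of a ring of characteristic 2; that is, there is no ring R of characteristic 2 with R^× isomorphic to C_8 × C_4, and no ring R of characteristic 2 with R^× isomorphic to C_8 × C_8. -/
section FuchsCore

variable {S : Type} [CommRing S]

private lemma eat {a t : S} (h : a = a * t) (n : ℕ) (ht : t ^ n = 0) : a = 0 := by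
  have key : ∀ m : ℕ, a = a * t ^ m := by
    intro m
    induction m with
    | zero => simp
    | succ m ih =>
      calc a = a * t := h
      _ = (a * t ^ m) * t := by rw [← ih]
      _ = a * t ^ (m + 1) := by ring
  have := key n
  rw [ht, mul_zero] at this
  exact this

private lemma x5aux (x : S) (hx8 : x ^ 8 = 0) (hx4 : x ^ 4 ≠ 0) (hx5 : x ^ 5 ≠ 0)
    (hset : ∀ a : S, a ^ 2 = 0 → a = 0 ∨ a = x ^ 4 ∨ a = x ^ 5 ∨ a = x ^ 4 + x ^ 5) :
    False := by
  have h6 : (x ^ 6) ^ 2 = 0 := by linear_combination x ^ 4 * hx8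
  have hx30 : x ^ 3 ≠ 0 := fun h => hx4 (by linear_combination x * h)
  rcases hset _ h6 with h | h | h | h
  · have h3 : (x ^ 3) ^ 2 = 0 := by linear_combination h
    rcases hset _ h3 with g | g | g | g
    · exact hx30 g
    · exact hx30 (eat (a := x ^ 3) (t := x) (by linear_combination g) 8 hx8)
    · exact hx30 (eat (a := x ^ 3) (t := x ^ 2) (by linear_combination g) 4
        (by linear_combination hx8))
    · exact hx30 (eat (a := x ^ 3) (t := x + x ^ 2) (by linear_combination g) 8
        (by linear_combination (1 + x) ^ 8 * hx8))
  · exact hx4 (eat (a := x ^ 4) (t := x ^ 2) (by linear_combination -h) 4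
      (by linear_combination hx8))
  · exact hx5 (eat (a := x ^ 5) (t := x) (by linear_combination -h) 8 hx8)
  · exact hx4 (eat (a := x ^ 4) (t := x ^ 2 - x) (by linear_combination -h) 8
      (by linear_combination (x - 1) ^ 8 * hx8))

private lemma x5 (x k : S) (h2 : (2 : S) = 0) (hx8 : x ^ 8 = 0) (hx4 : x ^ 4 ≠ 0)
    (hk0 : k ≠ 0) (hk4 : k ≠ x ^ 4)
    (hK : ∀ a : S, a ^ 2 = 0 → a = 0 ∨ a = x ^ 4 ∨ a = k ∨ a = x ^ 4 + k + x ^ 4 * k) :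
    x ^ 5 = 0 := by
  have h5 : (x ^ 5) ^ 2 = 0 := by linear_combination x ^ 2 * hx8
  rcases hK _ h5 with h | h | h | h
  · exact h
  · exact (hx4 (eat (a := x ^ 4) (t := x) (by linear_combination -h) 8 hx8)).elim
  · exfalso
    have hx5ne : x ^ 5 ≠ 0 := fun h0 => hk0 (by rw [← h, h0])
    refine x5aux x hx8 hx4 hx5ne ?_
    intro a ha
    rcases hK a ha with g | g | g | g
    · exact Or.inl g
    · exact Or.inr (Or.inl g)
    · exact Or.inr (Or.inr (Or.inl (by rw [g, ← h])))
    · exact Or.inr (Or.inr (Or.inr (by linear_combination g - (1 + x ^ 4) * h + x * hx8)))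
  · exfalso
    have hkv : k = x ^ 4 + x ^ 5 := by
      linear_combination (x ^ 4 - 1) * h - x ^ 4 * h2 + (1 - x + k) * hx8
    have hx5ne : x ^ 5 ≠ 0 := fun h0 => hk4 (by rw [hkv, h0, add_zero])
    refine x5aux x hx8 hx4 hx5ne ?_
    intro a ha
    rcases hK a ha with g | g | g | g
    · exact Or.inl g
    · exact Or.inr (Or.inl g)
    · exact Or.inr (Or.inr (Or.inr (by rw [g, hkv])))
    · exact Or.inr (Or.inr (Or.inl
        (by linear_combination g + (1 + x ^ 4) * hkv + x ^ 4 * h2 + (1 + x) * hx8)))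

private lemma endA (x y c : S) (hx4 : x ^ 4 ≠ 0) (hx5 : x ^ 5 = 0)
    (hy' : y ^ 2 = x ^ 3 + c * x ^ 4)
    (hK : ∀ a : S, a ^ 2 = 0 → a = 0 ∨ a = x ^ 4 ∨ a = y ^ 2 ∨
      a = x ^ 4 + y ^ 2 + x ^ 4 * y ^ 2) : False := by
  have h1 : x * y ^ 2 = x ^ 4 := by linear_combination x * hy' + c * hx5
  have h0 : x ^ 2 * y ^ 2 = 0 := by linear_combination x ^ 2 * hy' + (1 + c * x) * hx5
  have hxyK : (x * y) ^ 2 = 0 := by linear_combination h0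
  rcases hK _ hxyK with h | h | h | h
  · exact hx4 (by linear_combination -h1 + y * h)
  · have hx4y : x ^ 4 * y = 0 := by linear_combination x ^ 3 * h + x ^ 2 * hx5
    exact hx4 (by linear_combination -h1 + y * h + hx4y)
  · have ya : x ^ 3 * y = 0 := by linear_combination x ^ 2 * h + h0
    have yb : x ^ 4 * y = 0 := by
      linear_combination x ^ 3 * h + x ^ 3 * hy' + (x + c * x ^ 2) * hx5
    exact hx4 (by linear_combination -h1 + y * h + y * hy' + ya + c * yb)
  · have e0 : x ^ 4 * y ^ 2 = 0 := by linear_combination x ^ 2 * h0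
    have ya : x ^ 3 * y = 0 := by
      linear_combination x ^ 2 * h + h0 + (x + x * y ^ 2) * hx5
    have yb : x ^ 4 * y = 0 := by
      linear_combination x ^ 3 * h + x ^ 3 * hy' +
        (x ^ 2 + x ^ 2 * y ^ 2 + x + c * x ^ 2) * hx5
    exact hx4 (by linear_combination -h1 + y * h + y * hy' + ya + (1 + c) * yb + y ^ 2 * yb)

private lemma yfin (x y : S) (hy8 : y ^ 8 = 0) (hy4 : y ^ 4 ≠ 0) (hy5 : y ^ 5 = 0)
    (e2 : x ^ 4 * y = 0)
    (hK : ∀ a : S, a ^ 2 = 0 → a = 0 ∨ a = x ^ 4 ∨ a = y ^ 4 ∨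
      a = x ^ 4 + y ^ 4 + x ^ 4 * y ^ 4) : False := by
  have h3y : (y ^ 3) ^ 2 = 0 := by linear_combination y * hy5
  rcases hK _ h3y with g | g | g | g
  · exact hy4 (by linear_combination y * g)
  · exact hy4 (by linear_combination y * g + e2)
  · have : y ^ 3 = 0 := eat (a := y ^ 3) (t := y) (by linear_combination g) 8 hy8
    exact hy4 (by linear_combination y * this)
  · exact hy4 (by linear_combination y * g + e2 + (1 + x ^ 4) * hy5)

private lemma lemA (x y : S) (h2 : (2 : S) = 0) (hx8 : x ^ 8 = 0) (hx4 : x ^ 4 ≠ 0)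
    (hy2 : y ^ 2 ≠ 0) (hyx : y ^ 2 ≠ x ^ 4)
    (hK : ∀ a : S, a ^ 2 = 0 → a = 0 ∨ a = x ^ 4 ∨ a = y ^ 2 ∨
      a = x ^ 4 + y ^ 2 + x ^ 4 * y ^ 2) : False := by
  have hx5 : x ^ 5 = 0 := x5 x (y ^ 2) h2 hx8 hx4 hy2 hyx hK
  have h3 : (x ^ 3) ^ 2 = 0 := by linear_combination x * hx5
  rcases hK _ h3 with h | h | h | h
  · exact hx4 (by linear_combination x * h)
  · have h30 : x ^ 3 = 0 := eat (h := by linear_combination h) 8 hx8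
    exact hx4 (by linear_combination x * h30)
  · exact endA x y 0 hx4 hx5 (by linear_combination -h) hK
  · have hxy4 : x ^ 4 * y ^ 2 = 0 := by
      linear_combination -x ^ 4 * h + x ^ 2 * hx5 - (1 + y ^ 2) * hx8
    have hy' : y ^ 2 = x ^ 3 + (-1 : S) * x ^ 4 := by linear_combination -h - hxy4
    exact endA x y (-1) hx4 hx5 hy' hK

private lemma lemB (x y : S) (h2 : (2 : S) = 0) (hx8 : x ^ 8 = 0) (hx4 : x ^ 4 ≠ 0)
    (hy8 : y ^ 8 = 0) (hy4 : y ^ 4 ≠ 0) (hne : y ^ 4 ≠ x ^ 4)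
    (hK : ∀ a : S, a ^ 2 = 0 → a = 0 ∨ a = x ^ 4 ∨ a = y ^ 4 ∨
      a = x ^ 4 + y ^ 4 + x ^ 4 * y ^ 4) : False := by
  have hK' : ∀ a : S, a ^ 2 = 0 → a = 0 ∨ a = y ^ 4 ∨ a = x ^ 4 ∨
      a = y ^ 4 + x ^ 4 + y ^ 4 * x ^ 4 := by
    intro a ha
    rcases hK a ha with g | g | g | g
    · exact Or.inl g
    · exact Or.inr (Or.inr (Or.inl g))
    · exact Or.inr (Or.inl g)
    · exact Or.inr (Or.inr (Or.inr (by linear_combination g)))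
  have hx5 : x ^ 5 = 0 := x5 x (y ^ 4) h2 hx8 hx4 hy4 hne hK
  have hy5 : y ^ 5 = 0 := x5 y (x ^ 4) h2 hy8 hy4 hx4 (Ne.symm hne) hK'
  have h3 : (x ^ 3) ^ 2 = 0 := by linear_combination x * hx5
  rcases hK _ h3 with h | h | h | h
  · exact hx4 (by linear_combination x * h)
  · have h30 : x ^ 3 = 0 := eat (h := by linear_combination h) 8 hx8
    exact hx4 (by linear_combination x * h30)
  · have e1 : x ^ 3 * y = 0 := by linear_combination y * h + hy5
    have e2 : x ^ 4 * y = 0 := by linear_combination x * e1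
    exact yfin x y hy8 hy4 hy5 e2 hK
  · have e0 : x ^ 4 * y ^ 4 = 0 := by
      linear_combination -x ^ 4 * h + x ^ 2 * hx5 - (1 + y ^ 4) * hx8
    have hy4e : y ^ 4 = x ^ 3 - x ^ 4 := by linear_combination -h - e0
    have estep : x ^ 3 * y = (x ^ 3 * y) * x := by linear_combination -y * hy4e + hy5
    have e1 : x ^ 3 * y = 0 := eat estep 8 hx8
    have e2 : x ^ 4 * y = 0 := by linear_combination x * e1
    exact yfin x y hy8 hy4 hy5 e2 hK

end FuchsCore


/-- Neither `C₈ × C₄` nor `C₈ × C₈` is the group of units of a ring of characteristic 2. -/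
theorem fuchs_c8c4_c8c8_not_realizable :
    (¬ ∃ (R : Type) (_ : Ring R), CharP R 2 ∧
      Nonempty (Rˣ ≃* Multiplicative (ZMod 8) × Multiplicative (ZMod 4))) ∧
    (¬ ∃ (R : Type) (_ : Ring R), CharP R 2 ∧
      Nonempty (Rˣ ≃* Multiplicative (ZMod 8) × Multiplicative (ZMod 8))) := by
  constructor
  · rintro ⟨R, _, hchar, ⟨e⟩⟩
    set G := (Multiplicative (ZMod 8) × Multiplicative (ZMod 4)) with hG
    let u : Rˣ := e.symm (Multiplicative.ofAdd (1 : ZMod 8), 1)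
    let v : Rˣ := e.symm (1, Multiplicative.ofAdd (1 : ZMod 4))
    have hu : e u = (Multiplicative.ofAdd (1 : ZMod 8), 1) := e.apply_symm_apply _
    have hv : e v = (1, Multiplicative.ofAdd (1 : ZMod 4)) := e.apply_symm_apply _
    have hcomm : (u : R) * (v : R) = (v : R) * (u : R) := by
      have : u * v = v * u := by
        apply e.injective
        rw [map_mul, map_mul, mul_comm]
      exact_mod_cast congrArg Units.val this
    let S := Subring.closure ({(u : R), (v : R)} : Set R)
    letI : CommRing S := Subring.closureCommRingOfComm (by
      rintro a (rfl | rfl) b (rfl | rfl) <;> first | rfl | exact hcomm | exact hcomm.symm)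
    let U : S := ⟨(u : R), Subring.subset_closure (Set.mem_insert _ _)⟩
    let V : S := ⟨(v : R), Subring.subset_closure (Set.mem_insert_of_mem _ rfl)⟩
    have h2R : (2 : R) = 0 := by exact_mod_cast CharP.cast_eq_zero R 2
    have h2 : (2 : S) = 0 := by
      apply Subtype.ext
      push_cast
      exact h2R
    have hu8 : u ^ 8 = 1 := by
      show e.symm _ ^ 8 = 1
      rw [← map_pow]
      have : ((Multiplicative.ofAdd (1 : ZMod 8), 1) : G) ^ 8 = 1 := by decide
      rw [this, map_one]
    have hU8 : U ^ 8 = 1 := by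
      apply Subtype.ext
      push_cast
      calc (u : R) ^ 8 = ((u ^ 8 : Rˣ) : R) := by rw [Units.val_pow_eq_pow_val]
      _ = 1 := by rw [hu8, Units.val_one]
    have hx8 : (U + 1) ^ 8 = 0 := by
      linear_combination hU8 +
        (4 * U ^ 7 + 14 * U ^ 6 + 28 * U ^ 5 + 35 * U ^ 4 + 28 * U ^ 3 + 14 * U ^ 2
          + 4 * U + 1) * h2
    have hx4 : (U + 1) ^ 4 ≠ 0 := by
      intro h4
      have hU4 : U ^ 4 = 1 := by
        linear_combination h4 - (2 * U ^ 3 + 3 * U ^ 2 + 2 * U + 1) * h2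
      have : u ^ 4 = 1 := by
        apply Units.ext
        have := congrArg Subtype.val hU4
        push_cast at this
        rw [Units.val_pow_eq_pow_val, Units.val_one]
        exact this
      have := congrArg e this
      rw [map_pow, hu, e.map_one] at this
      exact absurd this (by decide)
    have hy2 : (V + 1) ^ 2 ≠ 0 := by
      intro h4
      have hV2 : V ^ 2 = 1 := by
        linear_combination h4 - (V + 1) * h2
      have : v ^ 2 = 1 := by
        apply Units.ext
        have := congrArg Subtype.val hV2
        push_cast at this
        rw [Units.val_pow_eq_pow_val, Units.val_one]
        exact this
      have := congrArg e this
      rw [map_pow, hv, e.map_one] at this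
      exact absurd this (by decide)
    have hyx : (V + 1) ^ 2 ≠ (U + 1) ^ 4 := by
      intro h4
      have hVU : V ^ 2 = U ^ 4 := by
        linear_combination h4 + (2 * U ^ 3 + 3 * U ^ 2 + 2 * U - V) * h2
      have : v ^ 2 = u ^ 4 := by
        apply Units.ext
        have := congrArg Subtype.val hVU
        push_cast at this
        rw [Units.val_pow_eq_pow_val, Units.val_pow_eq_pow_val]
        exact this
      have := congrArg e this
      rw [map_pow, map_pow, hu, hv] at this
      exact absurd this (by decide)
    have hK : ∀ a : S, a ^ 2 = 0 → a = 0 ∨ a = (U + 1) ^ 4 ∨ a = (V + 1) ^ 2 ∨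
        a = (U + 1) ^ 4 + (V + 1) ^ 2 + (U + 1) ^ 4 * (V + 1) ^ 2 := by
      intro a ha
      have hn2 : (a : R) * (a : R) = 0 := by
        have h := congrArg Subtype.val ha
        push_cast at h
        rw [pow_two] at h
        exact h
      have hnn : (a : R) + (a : R) = 0 := by
        have h := congrArg (· * (a : R)) h2R
        simpa [two_mul] using h
      have hww : ((1 : R) + (a : R)) * ((1 : R) + (a : R)) = 1 := by
        rw [mul_add, mul_one, add_mul, one_mul, hn2, add_zero, add_assoc, hnn, add_zero]
      let W : Rˣ := ⟨1 + a, 1 + a, hww, hww⟩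
      have hW2 : W ^ 2 = 1 := by
        apply Units.ext
        rw [Units.val_pow_eq_pow_val, Units.val_one, pow_two]
        exact hww
      have hcl : ∀ g : G, g ^ 2 = 1 → g = 1 ∨ g = (Multiplicative.ofAdd (4 : ZMod 8), 1) ∨
          g = (1, Multiplicative.ofAdd (2 : ZMod 4)) ∨
          g = (Multiplicative.ofAdd (4 : ZMod 8), Multiplicative.ofAdd (2 : ZMod 4)) := by
        decide
      have heW : (e W) ^ 2 = 1 := by rw [← map_pow, hW2, e.map_one]
      rcases hcl _ heW with hg | hg | hg | hg
      · left
        have h1 := congrArg e.symm hg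
        rw [e.symm_apply_apply, map_one] at h1
        have h2' := congrArg Units.val h1
        apply Subtype.ext
        have : (1 : R) + (a : R) = 1 + 0 := by rw [add_zero]; exact h2'
        exact add_left_cancel this
      · right; left
        have h1 := congrArg e.symm hg
        have hu4 : u ^ 4 = e.symm (Multiplicative.ofAdd (4 : ZMod 8), 1) := by
          show e.symm _ ^ 4 = _
          rw [← map_pow]
          congr 1
        rw [e.symm_apply_apply, ← hu4] at h1
        have hS : (1 : S) + a = U ^ 4 := by
          apply Subtype.ext
          push_cast
          have h3 := congrArg Units.val h1
          rw [Units.val_pow_eq_pow_val] at h3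
          exact h3
        linear_combination hS - (2 * U ^ 3 + 3 * U ^ 2 + 2 * U + 1) * h2
      · right; right; left
        have h1 := congrArg e.symm hg
        have hv2 : v ^ 2 = e.symm (1, Multiplicative.ofAdd (2 : ZMod 4)) := by
          show e.symm _ ^ 2 = _
          rw [← map_pow]
          congr 1
        rw [e.symm_apply_apply, ← hv2] at h1
        have hS : (1 : S) + a = V ^ 2 := by
          apply Subtype.ext
          push_cast
          have h3 := congrArg Units.val h1
          rw [Units.val_pow_eq_pow_val] at h3
          exact h3
        linear_combination hS - (V + 1) * h2
      · right; right; right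
        have h1 := congrArg e.symm hg
        have huv : u ^ 4 * v ^ 2 =
            e.symm (Multiplicative.ofAdd (4 : ZMod 8), Multiplicative.ofAdd (2 : ZMod 4)) := by
          show e.symm _ ^ 4 * e.symm _ ^ 2 = _
          rw [← map_pow, ← map_pow, ← map_mul]
          congr 1
        rw [e.symm_apply_apply, ← huv] at h1
        have hS : (1 : S) + a = U ^ 4 * V ^ 2 := by
          apply Subtype.ext
          push_cast
          have h3 := congrArg Units.val h1
          rw [Units.val_mul, Units.val_pow_eq_pow_val, Units.val_pow_eq_pow_val] at h3
          exact h3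
        have hx4e : (U + 1) ^ 4 = U ^ 4 + 1 := by
          linear_combination (2 * U ^ 3 + 3 * U ^ 2 + 2 * U) * h2
        have hy2e : (V + 1) ^ 2 = V ^ 2 + 1 := by linear_combination V * h2
        rw [hx4e, hy2e]
        linear_combination hS - (U ^ 4 + V ^ 2 + 2) * h2
    exact lemA (U + 1) (V + 1) h2 hx8 hx4 hy2 hyx hK
  · rintro ⟨R, _, hchar, ⟨e⟩⟩
    set G := (Multiplicative (ZMod 8) × Multiplicative (ZMod 8)) with hG
    let u : Rˣ := e.symm (Multiplicative.ofAdd (1 : ZMod 8), 1)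
    let v : Rˣ := e.symm (1, Multiplicative.ofAdd (1 : ZMod 8))
    have hu : e u = (Multiplicative.ofAdd (1 : ZMod 8), 1) := e.apply_symm_apply _
    have hv : e v = (1, Multiplicative.ofAdd (1 : ZMod 8)) := e.apply_symm_apply _
    have hcomm : (u : R) * (v : R) = (v : R) * (u : R) := by
      have : u * v = v * u := by
        apply e.injective
        rw [map_mul, map_mul, mul_comm]
      exact_mod_cast congrArg Units.val this
    let S := Subring.closure ({(u : R), (v : R)} : Set R)
    letI : CommRing S := Subring.closureCommRingOfComm (by
      rintro a (rfl | rfl) b (rfl | rfl) <;> first | rfl | exact hcomm | exact hcomm.symm)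
    let U : S := ⟨(u : R), Subring.subset_closure (Set.mem_insert _ _)⟩
    let V : S := ⟨(v : R), Subring.subset_closure (Set.mem_insert_of_mem _ rfl)⟩
    have h2R : (2 : R) = 0 := by exact_mod_cast CharP.cast_eq_zero R 2
    have h2 : (2 : S) = 0 := by
      apply Subtype.ext
      push_cast
      exact h2R
    have hu8 : u ^ 8 = 1 := by
      show e.symm _ ^ 8 = 1
      rw [← map_pow]
      have : ((Multiplicative.ofAdd (1 : ZMod 8), 1) : G) ^ 8 = 1 := by decide
      rw [this, map_one]
    have hv8 : v ^ 8 = 1 := by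
      show e.symm _ ^ 8 = 1
      rw [← map_pow]
      have : ((1, Multiplicative.ofAdd (1 : ZMod 8)) : G) ^ 8 = 1 := by decide
      rw [this, map_one]
    have hU8 : U ^ 8 = 1 := by
      apply Subtype.ext
      push_cast
      calc (u : R) ^ 8 = ((u ^ 8 : Rˣ) : R) := by rw [Units.val_pow_eq_pow_val]
      _ = 1 := by rw [hu8, Units.val_one]
    have hV8 : V ^ 8 = 1 := by
      apply Subtype.ext
      push_cast
      calc (v : R) ^ 8 = ((v ^ 8 : Rˣ) : R) := by rw [Units.val_pow_eq_pow_val]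
      _ = 1 := by rw [hv8, Units.val_one]
    have hx8 : (U + 1) ^ 8 = 0 := by
      linear_combination hU8 +
        (4 * U ^ 7 + 14 * U ^ 6 + 28 * U ^ 5 + 35 * U ^ 4 + 28 * U ^ 3 + 14 * U ^ 2
          + 4 * U + 1) * h2
    have hy8 : (V + 1) ^ 8 = 0 := by
      linear_combination hV8 +
        (4 * V ^ 7 + 14 * V ^ 6 + 28 * V ^ 5 + 35 * V ^ 4 + 28 * V ^ 3 + 14 * V ^ 2
          + 4 * V + 1) * h2
    have hx4 : (U + 1) ^ 4 ≠ 0 := by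
      intro h4
      have hU4 : U ^ 4 = 1 := by
        linear_combination h4 - (2 * U ^ 3 + 3 * U ^ 2 + 2 * U + 1) * h2
      have : u ^ 4 = 1 := by
        apply Units.ext
        have := congrArg Subtype.val hU4
        push_cast at this
        rw [Units.val_pow_eq_pow_val, Units.val_one]
        exact this
      have := congrArg e this
      rw [map_pow, hu, e.map_one] at this
      exact absurd this (by decide)
    have hy4 : (V + 1) ^ 4 ≠ 0 := by
      intro h4
      have hV4 : V ^ 4 = 1 := by
        linear_combination h4 - (2 * V ^ 3 + 3 * V ^ 2 + 2 * V + 1) * h2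
      have : v ^ 4 = 1 := by
        apply Units.ext
        have := congrArg Subtype.val hV4
        push_cast at this
        rw [Units.val_pow_eq_pow_val, Units.val_one]
        exact this
      have := congrArg e this
      rw [map_pow, hv, e.map_one] at this
      exact absurd this (by decide)
    have hne : (V + 1) ^ 4 ≠ (U + 1) ^ 4 := by
      intro h4
      have hVU : V ^ 4 = U ^ 4 := by
        linear_combination h4 +
          (2 * U ^ 3 + 3 * U ^ 2 + 2 * U - 2 * V ^ 3 - 3 * V ^ 2 - 2 * V) * h2
      have : v ^ 4 = u ^ 4 := by
        apply Units.ext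
        have := congrArg Subtype.val hVU
        push_cast at this
        rw [Units.val_pow_eq_pow_val, Units.val_pow_eq_pow_val]
        exact this
      have := congrArg e this
      rw [map_pow, map_pow, hu, hv] at this
      exact absurd this (by decide)
    have hK : ∀ a : S, a ^ 2 = 0 → a = 0 ∨ a = (U + 1) ^ 4 ∨ a = (V + 1) ^ 4 ∨
        a = (U + 1) ^ 4 + (V + 1) ^ 4 + (U + 1) ^ 4 * (V + 1) ^ 4 := by
      intro a ha
      have hn2 : (a : R) * (a : R) = 0 := by
        have h := congrArg Subtype.val ha
        push_cast at h
        rw [pow_two] at h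
        exact h
      have hnn : (a : R) + (a : R) = 0 := by
        have h := congrArg (· * (a : R)) h2R
        simpa [two_mul] using h
      have hww : ((1 : R) + (a : R)) * ((1 : R) + (a : R)) = 1 := by
        rw [mul_add, mul_one, add_mul, one_mul, hn2, add_zero, add_assoc, hnn, add_zero]
      let W : Rˣ := ⟨1 + a, 1 + a, hww, hww⟩
      have hW2 : W ^ 2 = 1 := by
        apply Units.ext
        rw [Units.val_pow_eq_pow_val, Units.val_one, pow_two]
        exact hww
      have hcl : ∀ g : G, g ^ 2 = 1 → g = 1 ∨ g = (Multiplicative.ofAdd (4 : ZMod 8), 1) ∨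
          g = (1, Multiplicative.ofAdd (4 : ZMod 8)) ∨
          g = (Multiplicative.ofAdd (4 : ZMod 8), Multiplicative.ofAdd (4 : ZMod 8)) := by
        decide
      have heW : (e W) ^ 2 = 1 := by rw [← map_pow, hW2, e.map_one]
      rcases hcl _ heW with hg | hg | hg | hg
      · left
        have h1 := congrArg e.symm hg
        rw [e.symm_apply_apply, map_one] at h1
        have h2' := congrArg Units.val h1
        apply Subtype.ext
        have : (1 : R) + (a : R) = 1 + 0 := by rw [add_zero]; exact h2'
        exact add_left_cancel this
      · right; left
        have h1 := congrArg e.symm hg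
        have hu4 : u ^ 4 = e.symm (Multiplicative.ofAdd (4 : ZMod 8), 1) := by
          show e.symm _ ^ 4 = _
          rw [← map_pow]
          congr 1
        rw [e.symm_apply_apply, ← hu4] at h1
        have hS : (1 : S) + a = U ^ 4 := by
          apply Subtype.ext
          push_cast
          have h3 := congrArg Units.val h1
          rw [Units.val_pow_eq_pow_val] at h3
          exact h3
        linear_combination hS - (2 * U ^ 3 + 3 * U ^ 2 + 2 * U + 1) * h2
      · right; right; left
        have h1 := congrArg e.symm hg
        have hv4 : v ^ 4 = e.symm (1, Multiplicative.ofAdd (4 : ZMod 8)) := by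
          show e.symm _ ^ 4 = _
          rw [← map_pow]
          congr 1
        rw [e.symm_apply_apply, ← hv4] at h1
        have hS : (1 : S) + a = V ^ 4 := by
          apply Subtype.ext
          push_cast
          have h3 := congrArg Units.val h1
          rw [Units.val_pow_eq_pow_val] at h3
          exact h3
        linear_combination hS - (2 * V ^ 3 + 3 * V ^ 2 + 2 * V + 1) * h2
      · right; right; right
        have h1 := congrArg e.symm hg
        have huv : u ^ 4 * v ^ 4 =
            e.symm (Multiplicative.ofAdd (4 : ZMod 8), Multiplicative.ofAdd (4 : ZMod 8)) := by
          show e.symm _ ^ 4 * e.symm _ ^ 4 = _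
          rw [← map_pow, ← map_pow, ← map_mul]
          congr 1
        rw [e.symm_apply_apply, ← huv] at h1
        have hS : (1 : S) + a = U ^ 4 * V ^ 4 := by
          apply Subtype.ext
          push_cast
          have h3 := congrArg Units.val h1
          rw [Units.val_mul, Units.val_pow_eq_pow_val, Units.val_pow_eq_pow_val] at h3
          exact h3
        have hx4e : (U + 1) ^ 4 = U ^ 4 + 1 := by
          linear_combination (2 * U ^ 3 + 3 * U ^ 2 + 2 * U) * h2
        have hy4e : (V + 1) ^ 4 = V ^ 4 + 1 := by
          linear_combination (2 * V ^ 3 + 3 * V ^ 2 + 2 * V) * h2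
        rw [hx4e, hy4e]
        linear_combination hS - (U ^ 4 + V ^ 4 + 2) * h2
    exact lemB (U + 1) (V + 1) h2 hx8 hx4 hy8 hy4 hne hK
end

section
/- Let R be a ring whose group of units is a 2-group (i.e., every unit of R has order a power of 2). If −1 has a fourth root in R, i.e., there exists z ∈ R with z^4 = −1, then R has positive characteristic. -/
lemma aux_pow_form (R : Type) [Ring R] (s : R) (hs : s ^ 2 = 2) :
    ∀ N : ℕ, ∃ a b : ℕ, 0 < a ∧ 0 < b ∧ (1 + s) ^ (N + 1) = (a : R) + (b : R) * s := by
  intro N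
  induction N with
  | zero => exact ⟨1, 1, one_pos, one_pos, by push_cast; noncomm_ring⟩
  | succ n ih =>
    obtain ⟨a, b, ha, hb, h⟩ := ih
    refine ⟨a + 2 * b, a + b, by omega, by omega, ?_⟩
    have h1 : (1 + s) ^ (n + 1 + 1) = ((a : R) + (b : R) * s) * (1 + s) := by
      rw [pow_succ, h]
    rw [h1]
    push_cast
    calc ((a : R) + (b : R) * s) * (1 + s)
        = (a : R) + ((a : R) + (b : R)) * s + (b : R) * s ^ 2 := by noncomm_ring
      _ = (a : R) + ((a : R) + (b : R)) * s + (b : R) * 2 := by rw [hs]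
      _ = (a : R) + 2 * (b : R) + ((a : R) + (b : R)) * s := by noncomm_ring

lemma aux_sqrt2 (b : ℕ) (c : ℤ) (hb : 0 < b) : 2 * (b : ℤ) ^ 2 ≠ c ^ 2 := by
  intro h
  have hbR : (0 : ℝ) < b := by exact_mod_cast hb
  have h1 : (2 : ℝ) = ((|c| : ℝ) / b) ^ 2 := by
    have := congrArg (fun x : ℤ => (x : ℝ)) h
    push_cast at this
    rw [div_pow, ← abs_pow, abs_of_nonneg (by positivity : (0:ℝ) ≤ (c:ℝ)^2)]
    field_simp
    linarith
  have h2 : Real.sqrt 2 = (|c| : ℝ) / b := by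
    rw [h1, Real.sqrt_sq (by positivity)]
  apply Rat.not_irrational ((|c| : ℚ) / (b : ℚ))
  have hq : (((|c| : ℚ) / (b : ℚ) : ℚ) : ℝ) = Real.sqrt 2 := by
    rw [h2]; push_cast; ring
  rw [hq]
  exact irrational_sqrt_two

/-- If every unit of a ring `R` has order a power of 2 and `-1` has a fourth root in `R`,
then `R` has positive characteristic. -/
theorem fourth_root_positive_char (R : Type) [Ring R]
    (h2 : ∀ u : Rˣ, ∃ m : ℕ, orderOf u = 2 ^ m)
    (hz : ∃ z : R, z ^ 4 = -1) :
    ∃ n : ℕ, 0 < n ∧ CharP R n := by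
  obtain ⟨z, hz4⟩ := hz
  set s : R := z - z ^ 3 with hs_def
  have hs : s ^ 2 = 2 := by
    have h1 : s ^ 2 = z ^ 2 - 2 * z ^ 4 + z ^ 4 * z ^ 2 := by rw [hs_def]; noncomm_ring
    rw [h1, hz4]; noncomm_ring; simp [two_smul]; norm_num
  have hinv : (1 + s) * (s - 1) = 1 := by
    have h1 : (1 + s) * (s - 1) = s ^ 2 - 1 := by noncomm_ring
    rw [h1, hs]; norm_num
  have hinv' : (s - 1) * (1 + s) = 1 := by
    have h1 : (s - 1) * (1 + s) = s ^ 2 - 1 := by noncomm_ring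
    rw [h1, hs]; norm_num
  set u : Rˣ := ⟨1 + s, s - 1, hinv, hinv'⟩ with hu_def
  obtain ⟨m, hm⟩ := h2 u
  have hpow : ((1 + s) : R) ^ (2 ^ m) = 1 := by
    have h1 := pow_orderOf_eq_one u
    rw [hm] at h1
    have h3 := congrArg (Units.val) h1
    rw [Units.val_pow_eq_pow_val] at h3
    exact h3
  obtain ⟨N, hNeq⟩ : ∃ N : ℕ, 2 ^ m = N + 1 :=
    ⟨2 ^ m - 1, by have := Nat.one_le_two_pow (n := m); omega⟩
  obtain ⟨a, b, ha, hb, hform⟩ := aux_pow_form R s hs N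
  rw [hNeq, hform] at hpow
  -- (b:R) * s = 1 - a
  have hbs : (b : R) * s = 1 - (a : R) := by
    rw [← hpow]; noncomm_ring
  -- square both sides
  have hsq : ((2 * (b : ℤ) ^ 2 - (1 - (a : ℤ)) ^ 2 : ℤ) : R) = 0 := by
    have hc : Commute ((b : R)) s := (Nat.cast_commute b s)
    have h1 : ((b : R) * s) * ((b : R) * s) = (b : R) ^ 2 * s ^ 2 := by
      calc ((b : R) * s) * ((b : R) * s) = (b : R) * (s * (b : R)) * s := by noncomm_ring
        _ = (b : R) * ((b : R) * s) * s := by rw [← hc.eq]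
        _ = (b : R) ^ 2 * s ^ 2 := by noncomm_ring
    have h2' : (1 - (a : R)) * (1 - (a : R)) = (1 - (a : R)) ^ 2 := by noncomm_ring
    have h3 : (b : R) ^ 2 * s ^ 2 = (1 - (a : R)) ^ 2 := by
      rw [← h1, hbs, h2']
    rw [hs] at h3
    push_cast
    rw [sub_eq_zero]
    calc (2 : R) * (b : R) ^ 2 = (b:R) ^ 2 * 2 := by rw [two_mul, mul_two]
      _ = (1 - (a : R)) ^ 2 := h3
  have hk : (2 * (b : ℤ) ^ 2 - (1 - (a : ℤ)) ^ 2 : ℤ) ≠ 0 := by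
    intro hcon
    exact aux_sqrt2 b (1 - (a : ℤ)) hb (by omega)
  refine ⟨ringChar R, ?_, ringChar.charP R⟩
  rcases Nat.eq_zero_or_pos (ringChar R) with h0 | h0
  · exfalso
    have : CharP R 0 := by rw [← h0]; exact ringChar.charP R
    have := (CharP.intCast_eq_zero_iff R 0 _).mp hsq
    simp at this
    exact hk this
  · exact h0
end

section
/- If p is an odd prime, then every finite p-group that is the group of units of some ring is abelian. -/
/-- The corner `eRe` of a ring at an idempotent `e`, described as the elements
fixed by left and right multiplication by `e`. -/
abbrev FuchsCorner (R : Type) [Ring R] (e : R) : Type :=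
  {x : R // e * x = x ∧ x * e = x}

/-- The ring structure on a corner. -/
def fuchsCornerRing {R : Type} [Ring R] {e : R} (he : e * e = e) :
    Ring (FuchsCorner R e) where
  zero := ⟨0, by simp, by simp⟩
  add x y := ⟨x.1 + y.1, by rw [mul_add, x.2.1, y.2.1], by rw [add_mul, x.2.2, y.2.2]⟩
  neg x := ⟨-x.1, by rw [mul_neg, x.2.1], by rw [neg_mul, x.2.2]⟩
  mul x y := ⟨x.1 * y.1, by rw [← mul_assoc, x.2.1], by rw [mul_assoc, y.2.2]⟩
  one := ⟨e, he, he⟩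
  nsmul n x := ⟨n • x.1, by rw [mul_smul_comm, x.2.1], by rw [smul_mul_assoc, x.2.2]⟩
  zsmul n x := ⟨n • x.1, by rw [mul_smul_comm, x.2.1], by rw [smul_mul_assoc, x.2.2]⟩
  nsmul_zero x := Subtype.ext (zero_nsmul _)
  nsmul_succ n x := Subtype.ext (succ_nsmul _ _)
  zsmul_zero' x := Subtype.ext (zero_zsmul _)
  zsmul_succ' n x := Subtype.ext (by
    show ((n.succ : ℤ)) • x.1 = (n : ℤ) • x.1 + x.1
    push_cast; rw [add_zsmul, one_zsmul])
  zsmul_neg' n x := Subtype.ext (by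
    show (Int.negSucc n) • x.1 = -(((n.succ : ℤ)) • x.1)
    rw [negSucc_zsmul]; norm_cast)
  add_assoc a b c := Subtype.ext (add_assoc _ _ _)
  zero_add a := Subtype.ext (zero_add _)
  add_zero a := Subtype.ext (add_zero _)
  add_comm a b := Subtype.ext (add_comm _ _)
  mul_assoc a b c := Subtype.ext (mul_assoc _ _ _)
  one_mul a := Subtype.ext a.2.1
  mul_one a := Subtype.ext a.2.2
  left_distrib a b c := Subtype.ext (mul_add _ _ _)
  right_distrib a b c := Subtype.ext (add_mul _ _ _)
  zero_mul a := Subtype.ext (zero_mul _)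
  mul_zero a := Subtype.ext (mul_zero _)
  neg_add_cancel a := Subtype.ext (neg_add_cancel _)

/-- A finite reduced ring is commutative. -/
theorem fuchs_comm_of_finite_reduced :
    ∀ (n : ℕ) (R : Type) [Ring R] [Fintype R], Fintype.card R ≤ n → IsReduced R →
      ∀ a b : R, a * b = b * a := by
  intro n
  induction n with
  | zero =>
    intro R _ _ hcard _
    haveI : Nonempty R := ⟨0⟩
    have := Fintype.card_pos (α := R)
    omega
  | succ n IH =>
    intro R _ _ hcard hred a b
    classical
    have sqz : ∀ x : R, x * x = 0 → x = 0 := by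
      intro x hx
      exact IsNilpotent.eq_zero ⟨2, by rwa [pow_two]⟩
    by_cases hid : ∃ e : R, e * e = e ∧ e ≠ 0 ∧ e ≠ 1
    · obtain ⟨e, he, he0, he1⟩ := hid
      have hee : ∀ y : R, e * (e * y) = e * y := fun y => by rw [← mul_assoc, he]
      have hcentral : ∀ x : R, e * x = x * e := by
        intro x
        have h1 : e * x - e * x * e = 0 := by
          apply sqz
          simp only [mul_sub, sub_mul, mul_assoc, hee]
          abel
        have h2 : x * e - e * x * e = 0 := by
          apply sqz
          simp only [mul_sub, sub_mul, mul_assoc, hee]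
          abel
        rw [sub_eq_zero] at h1 h2
        rw [h1, h2]
      -- common machinery for a central idempotent f
      have hpart : ∀ f : R, f * f = f → f ≠ 0 → f ≠ 1 → (∀ y, f * y = y * f) →
          f * (a * b) = f * (b * a) := by
        intro f hf hf0 hf1 hfc
        letI : Ring (FuchsCorner R f) := fuchsCornerRing hf
        letI : Fintype (FuchsCorner R f) := Fintype.ofFinite _
        have hlt : Fintype.card (FuchsCorner R f) < Fintype.card R := by
          apply Fintype.card_lt_of_injective_of_notMem (Subtype.val) Subtype.val_injective
            (b := 1 - f)
          rintro ⟨⟨z, hz1, hz2⟩, hzeq⟩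
          simp only at hzeq
          subst hzeq
          have h0 : f * (1 - f) = 0 := by rw [mul_sub, mul_one, hf, sub_self]
          rw [h0] at hz1
          exact hf1 (sub_eq_zero.mp hz1.symm).symm
        have hvalmul : ∀ x y : FuchsCorner R f, ((x * y : FuchsCorner R f) : R) = x.1 * y.1 :=
          fun _ _ => rfl
        have hvp : ∀ (k : ℕ) (w : FuchsCorner R f),
            ((w ^ (k + 1) : FuchsCorner R f) : R) = (w : R) ^ (k + 1) := by
          intro k w
          induction k with
          | zero => rw [pow_one, pow_one]
          | succ m ih =>
            rw [pow_succ w (m + 1), pow_succ ((w : R)) (m + 1), hvalmul, ih]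
        have hredC : IsReduced (FuchsCorner R f) := by
          constructor
          rintro z ⟨m, hm⟩
          cases m with
          | zero =>
            rw [pow_zero] at hm
            have : f = (0 : R) := congrArg Subtype.val hm
            exact absurd this hf0
          | succ m =>
            have : (z : R) ^ (m + 1) = 0 := by
              rw [← hvp]
              exact congrArg Subtype.val hm
            have hz0 : (z : R) = 0 := IsNilpotent.eq_zero ⟨m + 1, this⟩
            exact Subtype.ext hz0
        have hmem : ∀ y : R, f * (f * y) = f * y ∧ (f * y) * f = f * y := by
          intro y
          constructor
          · rw [← mul_assoc, hf]
          · rw [mul_assoc, ← hfc y, ← mul_assoc, hf]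
        have hcm := IH (FuchsCorner R f) (by omega) hredC
          ⟨f * a, hmem a⟩ ⟨f * b, hmem b⟩
        have hvals : (f * a) * (f * b) = (f * b) * (f * a) := congrArg Subtype.val hcm
        have hexp : ∀ y z : R, (f * y) * (f * z) = f * (y * z) := by
          intro y z
          rw [mul_assoc f y (f * z), ← mul_assoc y f z, ← hfc y, mul_assoc f y z,
            ← mul_assoc f f (y * z), hf]
        rw [hexp, hexp] at hvals
        exact hvals
      have hf' : (1 - e) * (1 - e) = 1 - e := by
        have : (1 - e) * (1 - e) = 1 - e - e + e * e := by noncomm_ring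
        rw [this, he]; abel
      have hf0' : (1 : R) - e ≠ 0 := by
        intro h
        exact he1 (sub_eq_zero.mp h).symm
      have hf1' : (1 : R) - e ≠ 1 := by
        intro h
        apply he0
        have := congrArg (fun z => (1 : R) - z) h
        simpa using this
      have hcentral' : ∀ y : R, (1 - e) * y = y * (1 - e) := by
        intro y
        rw [sub_mul, one_mul, mul_sub, mul_one, hcentral]
      have h1 := hpart e he he0 he1 hcentral
      have h2 := hpart (1 - e) hf' hf0' hf1' hcentral'
      have h3 : ∀ z : R, z = e * z + (1 - e) * z := by
        intro z
        rw [← add_mul]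
        simp
      calc a * b = e * (a * b) + (1 - e) * (a * b) := h3 _
        _ = e * (b * a) + (1 - e) * (b * a) := by rw [h1, h2]
        _ = b * a := (h3 _).symm
    · push_neg at hid
      rcases subsingleton_or_nontrivial R with hs | hnt
      · exact Subsingleton.elim _ _
      have hunit : ∀ x : R, x ≠ 0 → ∃ m, 1 ≤ m ∧ x ^ m = 1 := by
        intro x hx
        obtain ⟨i0, j0, hne, hij0⟩ :=
          Finite.exists_ne_map_eq_of_infinite (fun k : ℕ => x ^ k)
        have hex : ∃ i j, i < j ∧ x ^ i = x ^ j := by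
          rcases lt_or_gt_of_ne hne with h | h
          · exact ⟨i0, j0, h, hij0⟩
          · exact ⟨j0, i0, h, hij0.symm⟩
        obtain ⟨i, j, hlt, hij⟩ := hex
        set d := j - i with hd
        have hd1 : 1 ≤ d := by omega
        have hstep : ∀ k, i ≤ k → x ^ (k + d) = x ^ k := by
          intro k hk
          have h1 : k + d = (k - i) + j := by omega
          have h2 : (k - i) + i = k := by omega
          rw [h1, pow_add, ← hij, ← pow_add, h2]
        have hmult : ∀ t k, i ≤ k → x ^ (k + t * d) = x ^ k := by
          intro t
          induction t with
          | zero => intro k hk; simp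
          | succ s ih =>
            intro k hk
            have h1 : k + (s + 1) * d = (k + s * d) + d := by ring
            rw [h1, hstep (k + s * d) (by omega), ih k hk]
        refine ⟨(i + 1) * d, Nat.one_le_iff_ne_zero.mpr (Nat.mul_ne_zero (by omega) (by omega)), ?_⟩
        have him : i ≤ (i + 1) * d := by nlinarith
        have hidem : x ^ ((i + 1) * d) * x ^ ((i + 1) * d) = x ^ ((i + 1) * d) := by
          rw [← pow_add]
          exact hmult (i + 1) ((i + 1) * d) him
        have hne0 : x ^ ((i + 1) * d) ≠ 0 := by
          intro h0
          exact hx (IsNilpotent.eq_zero ⟨(i + 1) * d, h0⟩)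
        exact hid _ hidem hne0
      haveI : NoZeroDivisors R := by
        constructor
        intro x y hxy
        by_cases hx : x = 0
        · exact Or.inl hx
        · right
          obtain ⟨m, hm1, hm⟩ := hunit x hx
          have h1 : x ^ (m - 1) * x = x ^ m := by
            rw [← pow_succ]
            congr 1
            omega
          calc y = x ^ m * y := by rw [hm, one_mul]
            _ = x ^ (m - 1) * (x * y) := by rw [← h1, mul_assoc]
            _ = 0 := by rw [hxy, mul_zero]
      haveI : IsDomain R := NoZeroDivisors.to_isDomain R
      exact (Finite.isDomain_to_isField R).mul_comm a b

/-- If `p` is an odd prime, every realizable finite `p`-group is abelian. -/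
theorem fuchs_odd_p_group_abelian (p : ℕ) (hp : p.Prime) (hodd : Odd p)
    (G : Type) [Group G] [Fintype G] (hG : ∃ e : ℕ, Fintype.card G = p ^ e)
    (hreal : ∃ (R : Type) (_ : Ring R), Nonempty (Rˣ ≃* G)) :
    ∀ a b : G, a * b = b * a := by
  classical
  obtain ⟨e, hcard⟩ := hG
  obtain ⟨R, _, ⟨φ⟩⟩ := hreal
  have key : ∀ u v : Rˣ, u * v = v * u := by
    intro u v
    rcases subsingleton_or_nontrivial R with hs | hnt
    · haveI : Subsingleton Rˣ := ⟨fun x y => Units.ext (Subsingleton.elim _ _)⟩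
      exact Subsingleton.elim _ _
    letI : Fintype Rˣ := Fintype.ofEquiv G φ.toEquiv.symm
    have hcardU : Fintype.card Rˣ = p ^ e := by
      rw [← hcard]
      exact Fintype.card_congr φ.toEquiv
    have hpe : Odd (p ^ e) := hodd.pow
    have hndvd : ¬ (2 ∣ p ^ e) := by
      rw [Nat.odd_iff] at hpe
      omega
    -- every unit of square one is trivial
    have hsq1 : ∀ w : Rˣ, w * w = 1 → w = 1 := by
      intro w hw
      have h1 : orderOf w ∣ 2 := orderOf_dvd_of_pow_eq_one (by rw [pow_two]; exact hw)
      have h2 : orderOf w ∣ p ^ e := hcardU ▸ orderOf_dvd_card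
      rcases (Nat.dvd_prime Nat.prime_two).mp h1 with h | h
      · exact orderOf_eq_one_iff.mp h
      · exact absurd (h ▸ h2) hndvd
    -- characteristic two
    have hneg1 : ((-1 : Rˣ) : R) = ((1 : Rˣ) : R) := by
      rw [hsq1 (-1) (by simp)]
    have h2 : (1 : R) + 1 = 0 := by
      simp only [Units.val_neg, Units.val_one] at hneg1
      have h' := congrArg (fun z : R => z + 1) hneg1
      simpa using h'.symm
    -- reducedness
    have hsqz : ∀ x : R, x * x = 0 → x = 0 := by
      intro x hx
      have hxx0 : x + x = 0 := by
        have := congrArg (fun z : R => z * x) h2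
        simpa [add_mul] using this
      have h1x : (1 + x) * (1 + x) = 1 := by
        have hexp : (1 + x) * (1 + x) = 1 + (x + x) + x * x := by noncomm_ring
        rw [hexp, hxx0, hx, add_zero, add_zero]
      set w : Rˣ := ⟨1 + x, 1 + x, h1x, h1x⟩ with hw
      have : w = 1 := hsq1 w (Units.ext h1x)
      have hval : (1 : R) + x = 1 := congrArg Units.val this
      calc x = (1 + x) - 1 := by abel
        _ = 0 := by rw [hval]; abel
    haveI hred : IsReduced R := by
      constructor
      have hkey : ∀ m : ℕ, ∀ x : R, x ^ m = 0 → x = 0 := by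
        intro m
        induction m using Nat.strong_induction_on with
        | _ m IHm =>
          intro x hxm
          match m, hxm with
          | 0, hxm =>
            rw [pow_zero] at hxm
            calc x = x * 1 := (mul_one x).symm
              _ = x * 0 := by rw [hxm]
              _ = 0 := mul_zero x
          | 1, hxm => rwa [pow_one] at hxm
          | (k + 2), hxm =>
            have hk : x ^ (k + 1) * x ^ (k + 1) = 0 := by
              rw [← pow_add]
              have : x ^ (k + 1 + (k + 1)) = x ^ (k + 2) * x ^ k := by
                rw [← pow_add]; congr 1; omega
              rw [this, hxm, zero_mul]
            have := hsqz _ hk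
            exact IHm (k + 1) (by omega) x this
      rintro x ⟨m, hm⟩
      exact hkey m x hm
    -- characteristic 2 instance
    haveI : CharP R 2 := by
      constructor
      intro m
      constructor
      · intro hcast
        by_contra hdvd
        have hm : m % 2 = 1 := by omega
        obtain ⟨k, hk⟩ : ∃ k, m = 2 * k + 1 := ⟨m / 2, by omega⟩
        rw [hk] at hcast
        push_cast at hcast
        have h20 : (2 : R) = 0 := by
          have : ((1 : R) + 1) = (2 : R) := by norm_num
          rw [← this, h2]
        rw [h20, zero_mul, zero_add] at hcast
        exact one_ne_zero hcast
      · rintro ⟨k, rfl⟩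
        push_cast
        have h20 : (2 : R) = 0 := by
          have : ((1 : R) + 1) = (2 : R) := by norm_num
          rw [← this, h2]
        rw [h20, zero_mul]
    letI : Algebra (ZMod 2) R := ZMod.algebra R 2
    set V : Set R := Set.range (Units.val : Rˣ → R) with hV
    have hVfin : V.Finite := Set.finite_range _
    have hVsub : ∀ y ∈ Submonoid.closure V, y ∈ V := by
      intro y hy
      induction hy using Submonoid.closure_induction with
      | mem z hz => exact hz
      | one => exact ⟨1, rfl⟩
      | mul z w hz hw ihz ihw =>
        obtain ⟨zu, rfl⟩ := ihz
        obtain ⟨wu, rfl⟩ := ihw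
        exact ⟨zu * wu, rfl⟩
    have hWfin : (Submonoid.closure V : Set R).Finite := hVfin.subset hVsub
    set A := Algebra.adjoin (ZMod 2) V with hA
    have hle : ∀ y : R, y ∈ A → y ∈ Submodule.span (ZMod 2) (Submonoid.closure V : Set R) := by
      intro y hy
      rw [← Algebra.adjoin_eq_span]
      exact hy
    haveI : Module.Finite (ZMod 2)
        (Submodule.span (ZMod 2) (Submonoid.closure V : Set R)) :=
      Module.Finite.span_of_finite (ZMod 2) hWfin
    haveI hfinspan : Finite (Submodule.span (ZMod 2) (Submonoid.closure V : Set R)) :=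
      Module.finite_of_finite (ZMod 2)
    haveI : Finite A := by
      apply Finite.of_injective
        (fun x : A => (⟨x.1, hle x.1 x.2⟩ :
          Submodule.span (ZMod 2) (Submonoid.closure V : Set R)))
      intro x y h
      exact Subtype.ext (Subtype.mk_eq_mk.mp h)
    letI : Fintype A := Fintype.ofFinite _
    haveI hredA : IsReduced A := isReduced_of_injective (Subalgebra.val A) Subtype.val_injective
    have hu : (u : R) ∈ A := Algebra.subset_adjoin ⟨u, rfl⟩
    have hv : (v : R) ∈ A := Algebra.subset_adjoin ⟨v, rfl⟩
    have hcm := fuchs_comm_of_finite_reduced (Fintype.card A) A (le_refl _) hredA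
      ⟨(u : R), hu⟩ ⟨(v : R), hv⟩
    have hvals : (u : R) * (v : R) = (v : R) * (u : R) := by
      simpa using congrArg Subtype.val hcm
    exact Units.ext (by simpa using hvals)
  intro a b
  have := key (φ.symm a) (φ.symm b)
  have h := congrArg φ this
  simpa [map_mul] using h
end
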